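/- arXiv:2405.19437 — 4 statements merged into one kernel-verified Lean document; each statement's English description precedes it below -/
import Mathlib

section
/- ℓ²-version of the optimal quantitative bound (Remark after Theorem 1). Assume (H1) and let uⁿ be the solution of the discretized equation. Then for every n ≥ 1, every f : 𝕋ᵈ → ℝ, every i ∈ Q_k and every t ≥ 0, the expectation under the law ν_t at time t of the generalized contact process started from μⁿ_{u₀} of the square ( n^{−d} Σ_{x∈𝕋ₙᵈ} ( 1(σ_x = i) − u_x^{n,i}(t) ) f(x/n) )² is at most ( n^{−2d} Σ_{x∈𝕋ₙᵈ} f(x/n)² )·( H_n(t) + log 3 ), where H_n(t) is the relative entropy of ν_t with respect to the profile measure μ_tⁿ. -/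
open MeasureTheory Real

noncomputable section

/-- The discrete torus of size `n` in dimension `d` (sites). -/
abbrev Site (d n : ℕ) := Fin d → Fin n

/-- The configuration space `Ω_{n,k}`. -/
abbrev Conf (d n k : ℕ) := Site d n → Fin (k + 1)

/-- The embedding `x ↦ x/n` of the discrete torus into `ℝᵈ` (representing `𝕋ᵈ = ℝᵈ/ℤᵈ`). -/
def emb (d n : ℕ) (x : Site d n) : Fin d → ℝ := fun j => (x j : ℝ) / n

/-- `σ + δ_x` : increase the value at site `x` by one, modulo `k+1`. -/
def flipUp {d n k : ℕ} (x : Site d n) (σ : Conf d n k) : Conf d n k :=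
  Function.update σ x (σ x + 1)

/-- Periodicity with period `1` in each coordinate: a function on `ℝᵈ` that represents a
function on the torus `𝕋ᵈ = ℝᵈ/ℤᵈ`. -/
def Periodic1 (d : ℕ) {α : Type*} (f : (Fin d → ℝ) → α) : Prop :=
  ∀ (x : Fin d → ℝ) (m : Fin d → ℤ), f (x + fun j => (m j : ℝ)) = f x

/-- The jump rate `c_x(σ)`. -/
def rate (d n k : ℕ) (a : ℝ) (J : (Fin d → ℝ) → (Fin d → ℝ) → ℝ) (x : Site d n)
    (σ : Conf d n k) : ℝ :=
  a * (if σ x = Fin.last k then 1 else 0) +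
    (1 / (n : ℝ) ^ d) * ∑ y ∈ Finset.univ.erase x,
      J (emb d n x) (emb d n y) * (if σ y = Fin.last k ∧ σ x ≠ Fin.last k then 1 else 0)

/-- The generator `L_n`, as a matrix indexed by configurations:
`(L_n F)(σ) = ∑_τ (gen)_{σ,τ} F(τ) = ∑_x c_x(σ) (F(σ+δ_x) − F(σ))`. -/
def gen (d n k : ℕ) (a : ℝ) (J : (Fin d → ℝ) → (Fin d → ℝ) → ℝ) :
    Matrix (Conf d n k) (Conf d n k) ℝ :=
  fun σ τ => ∑ x : Site d n, rate d n k a J x σ *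
    ((if τ = flipUp x σ then 1 else 0) - (if τ = σ then 1 else 0))

/-- The law at time `t` of the generalized contact process started from `μ`:
`ν_t(σ) = ∑_{σ'} μ(σ') (exp(t L_n))_{σ',σ}`. -/
def law (d n k : ℕ) (a : ℝ) (J : (Fin d → ℝ) → (Fin d → ℝ) → ℝ) (μ : Conf d n k → ℝ)
    (t : ℝ) (σ : Conf d n k) : ℝ :=
  ∑ σ' : Conf d n k, μ σ' * (NormedSpace.exp (t • gen d n k a J)) σ' σ

/-- The matrix `A`. -/
def Amat (k : ℕ) (a : ℝ) : Matrix (Fin (k + 1)) (Fin (k + 1)) ℝ :=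
  fun i j => if (i : ℕ) = 0 ∧ (j : ℕ) = k then a
    else if (i : ℕ) = k ∧ (j : ℕ) = k then -a else 0

/-- The matrix `M`. -/
def Mmat (k : ℕ) : Matrix (Fin (k + 1)) (Fin (k + 1)) ℝ :=
  fun i j => (if 1 ≤ (i : ℕ) ∧ (j : ℕ) = (i : ℕ) - 1 then (1 : ℝ) else 0) +
    (if (i : ℕ) < k ∧ j = i then (-1 : ℝ) else 0)

/-- The fundamental domain `[0,1]ᵈ` of the torus, used for integration. -/
def box (d : ℕ) : Set (Fin d → ℝ) := Set.Icc 0 1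

/-- The convolution `(J ∗ f)(x) = ∫_{𝕋ᵈ} J(x,y) f(y) dy`. -/
def conv (d : ℕ) (J : (Fin d → ℝ) → (Fin d → ℝ) → ℝ) (f : (Fin d → ℝ) → ℝ)
    (x : Fin d → ℝ) : ℝ :=
  ∫ y in box d, J x y * f y

/-- The product ("profile") measure associated to `u : 𝕋ₙᵈ → 𝒫_k`. -/
def profile (d n k : ℕ) (u : Site d n → Fin (k + 1) → ℝ) (σ : Conf d n k) : ℝ :=
  ∏ x : Site d n, u x (σ x)

/-- The discrete convolution `(Jⁿ ∗ g)_x = n^{-d} ∑_y J(x/n, y/n) g_y`. -/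
def convn (d n : ℕ) (J : (Fin d → ℝ) → (Fin d → ℝ) → ℝ) (g : Site d n → ℝ) (x : Site d n) : ℝ :=
  (1 / (n : ℝ) ^ d) * ∑ y : Site d n, J (emb d n x) (emb d n y) * g y


/-! ### Auxiliary material -/

open scoped Matrix
open NormedSpace

section MatrixExp

variable {m : Type*} [Fintype m] [DecidableEq m]


section NormInst

attribute [local instance] Matrix.linftyOpNormedAddCommGroup Matrix.linftyOpNormedRing
  Matrix.linftyOpNormedAlgebra

theorem exp_entry (L : Matrix m m ℝ) (i j : m) :
    NormedSpace.exp L i j = ∑' p : ℕ, ((Nat.factorial p : ℝ))⁻¹ * (L ^ p) i j := by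
  have hs : Summable fun p : ℕ => ((Nat.factorial p : ℝ))⁻¹ • L ^ p :=
    expSeries_summable' (𝕂 := ℝ) L
  have h1 : Summable fun p : ℕ => (((Nat.factorial p : ℝ))⁻¹ • L ^ p) i :=
    (Pi.summable.mp hs) i
  have H := exp_series_hasSum_exp' (𝕂 := ℝ) L
  have H2 : HasSum (fun p : ℕ => ((Nat.factorial p : ℝ))⁻¹ * (L ^ p) i j) (NormedSpace.exp L i j) := by
    have := (Pi.hasSum.mp ((Pi.hasSum.mp H) i)) j
    simp only [Matrix.smul_apply, smul_eq_mul] at this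
    exact this
  exact H2.tsum_eq.symm

theorem exp_entry_summable (L : Matrix m m ℝ) (i j : m) :
    Summable fun p : ℕ => ((Nat.factorial p : ℝ))⁻¹ * (L ^ p) i j := by
  have hs : Summable fun p : ℕ => ((Nat.factorial p : ℝ))⁻¹ • L ^ p :=
    expSeries_summable' (𝕂 := ℝ) L
  have h1 := (Pi.summable.mp ((Pi.summable.mp hs) i)) j
  simpa [Matrix.smul_apply] using h1

theorem rowsum_pow_zero' {L : Matrix m m ℝ} (h : ∀ i, ∑ j, L i j = 0) (p : ℕ) :
    1 ≤ p → ∀ i, ∑ j, (L ^ p) i j = 0 := by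
  induction p with
  | zero => omega
  | succ q ih =>
    intro hp i
    rcases Nat.eq_or_lt_of_le hp with h1 | h1
    · simp only [← h1, pow_one]; exact h i
    · have hq : 1 ≤ q := by omega
      rw [pow_succ']
      calc ∑ j, (L * L ^ q) i j = ∑ j, ∑ l, L i l * (L ^ q) l j := by
            simp [Matrix.mul_apply]
          _ = ∑ l, L i l * ∑ j, (L ^ q) l j := by
            rw [Finset.sum_comm]
            exact Finset.sum_congr rfl fun l _ => (Finset.mul_sum _ _ _).symm
          _ = 0 := by
            rw [Finset.sum_eq_zero]
            intro l _
            rw [ih hq l, mul_zero]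

theorem exp_rowsum_aux {L : Matrix m m ℝ} (h : ∀ i, ∑ j, L i j = 0) (i : m) :
    ∑ j, (NormedSpace.exp L) i j = 1 := by
  have h0 : ∑ j, (NormedSpace.exp L) i j
      = ∑' p : ℕ, ∑ j, ((Nat.factorial p : ℝ))⁻¹ * (L ^ p) i j := by
    simp only [exp_entry]
    rw [← Summable.tsum_finsetSum (fun j _ => exp_entry_summable L i j)]
  rw [h0]
  rw [tsum_eq_single 0]
  · simp [Matrix.one_apply, Finset.sum_ite_eq']
  · intro p hp
    rw [← Finset.mul_sum, rowsum_pow_zero' h p (Nat.one_le_iff_ne_zero.mpr hp) i, mul_zero]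

theorem pow_entry_nonneg {L : Matrix m m ℝ} (h : ∀ i j, 0 ≤ L i j) (p : ℕ) :
    ∀ i j, 0 ≤ (L ^ p) i j := by
  induction p with
  | zero => intro i j; rcases eq_or_ne i j with rfl | hij <;> simp [Matrix.one_apply, *]
  | succ q ih =>
    intro i j
    rw [pow_succ, Matrix.mul_apply]
    exact Finset.sum_nonneg fun l _ => mul_nonneg (ih i l) (h l j)

theorem exp_entry_nonneg {L : Matrix m m ℝ} (h : ∀ i j, 0 ≤ L i j) (i j : m) :
    0 ≤ NormedSpace.exp L i j := by
  rw [exp_entry]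
  exact tsum_nonneg fun p => mul_nonneg (by positivity) (pow_entry_nonneg h p i j)

theorem exp_smul_one (c : ℝ) :
    NormedSpace.exp (c • (1 : Matrix m m ℝ)) = Real.exp c • (1 : Matrix m m ℝ) := by
  rw [← Algebra.algebraMap_eq_smul_one, ← Algebra.algebraMap_eq_smul_one, Real.exp_eq_exp_ℝ]
  exact (algebraMap_exp_comm c).symm

theorem exp_metzler_nonneg_aux {L : Matrix m m ℝ} (h : ∀ i j, i ≠ j → 0 ≤ L i j) (i j : m) :
    0 ≤ NormedSpace.exp L i j := by
  classical
  set c : ℝ := ∑ l, max 0 (-(L l l)) with hc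
  have hcl : ∀ l : m, -(L l l) ≤ c := by
    intro l
    refine le_trans (le_max_right 0 _) (Finset.single_le_sum (f := fun l => max 0 (-(L l l)))
      (fun _ _ => le_max_left _ _) (Finset.mem_univ l))
  have hB : ∀ i' j' : m, 0 ≤ (L + c • (1 : Matrix m m ℝ)) i' j' := by
    intro i' j'
    rcases eq_or_ne i' j' with rfl | hne
    · simp only [Matrix.add_apply, Matrix.smul_apply, Matrix.one_apply_eq, smul_eq_mul, mul_one]
      linarith [hcl i']
    · simp only [Matrix.add_apply, Matrix.smul_apply, Matrix.one_apply_ne hne, smul_eq_mul,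
        mul_zero, add_zero]
      exact h i' j' hne
  have hsplit : L = (L + c • (1 : Matrix m m ℝ)) + (-c) • (1 : Matrix m m ℝ) := by
    rw [add_assoc, ← add_smul]; simp
  have hcomm : Commute (L + c • (1 : Matrix m m ℝ)) ((-c) • (1 : Matrix m m ℝ)) := by
    unfold Commute SemiconjBy
    simp [Matrix.mul_smul, Matrix.smul_mul]
  rw [hsplit, Matrix.exp_add_of_commute _ _ hcomm, exp_smul_one]
  have : (NormedSpace.exp (L + c • (1 : Matrix m m ℝ)) * Real.exp (-c) • (1 : Matrix m m ℝ)) i j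
      = Real.exp (-c) * NormedSpace.exp (L + c • (1 : Matrix m m ℝ)) i j := by
    rw [Matrix.mul_smul, Matrix.mul_one, Matrix.smul_apply, smul_eq_mul]
  rw [this]
  exact mul_nonneg (Real.exp_pos _).le (exp_entry_nonneg hB i j)

end NormInst

theorem exp_rowsum {L : Matrix m m ℝ} (h : ∀ i, ∑ j, L i j = 0) (i : m) :
    ∑ j, (NormedSpace.exp L) i j = 1 := by
  letI : NormedAddCommGroup (Matrix m m ℝ) := Matrix.linftyOpNormedAddCommGroup
  letI : NormedRing (Matrix m m ℝ) := Matrix.linftyOpNormedRing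
  letI : NormedAlgebra ℝ (Matrix m m ℝ) := Matrix.linftyOpNormedAlgebra
  exact exp_rowsum_aux h i

theorem exp_metzler_nonneg {L : Matrix m m ℝ} (h : ∀ i j, i ≠ j → 0 ≤ L i j) (i j : m) :
    0 ≤ NormedSpace.exp L i j := by
  letI : NormedAddCommGroup (Matrix m m ℝ) := Matrix.linftyOpNormedAddCommGroup
  letI : NormedRing (Matrix m m ℝ) := Matrix.linftyOpNormedRing
  letI : NormedAlgebra ℝ (Matrix m m ℝ) := Matrix.linftyOpNormedAlgebra
  exact exp_metzler_nonneg_aux h i j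


section Analytic


/-- Hoeffding's lemma, Bernoulli case, `t ≥ 0`. -/
theorem bern_log_le {p : ℝ} (hp0 : 0 ≤ p) (hp1 : p ≤ 1) {t : ℝ} (ht : 0 ≤ t) :
    Real.log (1 - p + p * Real.exp t) - p * t ≤ t ^ 2 / 8 := by
  set D : ℝ → ℝ := fun s => 1 - p + p * Real.exp s with hD
  have hDpos : ∀ s, 0 < D s := by
    intro s
    rcases lt_or_eq_of_le hp1 with h1 | h1
    · have : 0 ≤ p * Real.exp s := mul_nonneg hp0 (Real.exp_pos s).le
      simp only [hD]; nlinarith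
    · simp only [hD, h1]; simpa using Real.exp_pos s
  have hDderiv : ∀ s : ℝ, HasDerivAt D (p * Real.exp s) s := by
    intro s
    exact ((Real.hasDerivAt_exp s).const_mul p).const_add (1 - p)
  set L : ℝ → ℝ := fun s => Real.log (D s) - p * s with hL
  set L' : ℝ → ℝ := fun s => p * Real.exp s / D s - p with hL'
  have hLderiv : ∀ s : ℝ, HasDerivAt L (L' s) s := by
    intro s
    have hps : HasDerivAt (fun u : ℝ => p * u) p s := by
      simpa using (hasDerivAt_id s).const_mul p
    exact ((hDderiv s).log (hDpos s).ne').sub hps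
  have hL'deriv : ∀ s : ℝ, HasDerivAt L'
      ((p * Real.exp s * D s - p * Real.exp s * (p * Real.exp s)) / (D s) ^ 2) s := by
    intro s
    exact (((Real.hasDerivAt_exp s).const_mul p).div (hDderiv s) (hDpos s).ne').sub_const p
  have hL''le : ∀ s : ℝ,
      (p * Real.exp s * D s - p * Real.exp s * (p * Real.exp s)) / (D s) ^ 2 ≤ 1 / 4 := by
    intro s
    rw [div_le_iff₀ (pow_pos (hDpos s) 2)]
    have hes := Real.exp_pos s
    have h1 : p * Real.exp s * D s - p * Real.exp s * (p * Real.exp s)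
        = (p * Real.exp s) * (1 - p) := by simp only [hD]; ring
    rw [h1]
    nlinarith [sq_nonneg ((1 - p) - p * Real.exp s)]
  -- first fencing: L' s ≤ s / 4 on [0, t]
  have hstep1 : ∀ s ∈ Set.Icc (0:ℝ) t, L' s ≤ s / 4 := by
    intro s hs
    have := image_le_of_deriv_right_le_deriv_boundary
      (f := L') (f' := fun s => (p * Real.exp s * D s - p * Real.exp s * (p * Real.exp s)) / (D s) ^ 2)
      (a := 0) (b := t)
      (fun u hu => (hL'deriv u).continuousAt.continuousWithinAt)
      (fun u hu => (hL'deriv u).hasDerivWithinAt)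
      (B := fun s => s / 4) (B' := fun _ => 1 / 4)
      (by
        have hD0 : D 0 = 1 := by simp [hD]
        show p * Real.exp 0 / D 0 - p ≤ 0 / 4
        rw [hD0]; simp)
      (fun u hu => (((hasDerivAt_id u).div_const 4).continuousAt).continuousWithinAt)
      (fun u hu => ((hasDerivAt_id u).div_const 4).hasDerivWithinAt)
      (fun u _ => hL''le u)
    exact this hs
  -- second fencing: L t ≤ t^2/8
  have hstep2 := image_le_of_deriv_right_le_deriv_boundary
    (f := L) (f' := L') (a := 0) (b := t)
    (fun u hu => (hLderiv u).continuousAt.continuousWithinAt)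
    (fun u hu => (hLderiv u).hasDerivWithinAt)
    (B := fun s => s ^ 2 / 8) (B' := fun s => s / 4)
    (by simp [hL, hD])
    (fun u hu => (((hasDerivAt_pow 2 u).div_const 8).continuousAt).continuousWithinAt)
    (by
      intro u hu
      have : HasDerivAt (fun s : ℝ => s ^ 2 / 8) (u / 4) u := by
        have := (hasDerivAt_pow 2 u).div_const 8
        refine this.congr_deriv ?_
        rw [show (2:ℕ) - 1 = 1 from rfl, pow_one]
        push_cast
        ring
      exact this.hasDerivWithinAt)
    (fun u hu => hstep1 u ⟨hu.1, hu.2.le⟩)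
  exact hstep2 (Set.right_mem_Icc.mpr ht)

/-- Hoeffding's lemma, two-point case. -/
theorem bern_mgf {p : ℝ} (hp0 : 0 ≤ p) (hp1 : p ≤ 1) (t : ℝ) :
    p * Real.exp (t * (1 - p)) + (1 - p) * Real.exp (-(t * p)) ≤ Real.exp (t ^ 2 / 8) := by
  have key : ∀ q s : ℝ, 0 ≤ q → q ≤ 1 → 0 ≤ s →
      q * Real.exp (s * (1 - q)) + (1 - q) * Real.exp (-(s * q)) ≤ Real.exp (s ^ 2 / 8) := by
    intro q s hq0 hq1 hs
    have hD : (0:ℝ) < 1 - q + q * Real.exp s := by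
      rcases lt_or_eq_of_le hq1 with h1 | h1
      · nlinarith [ (Real.exp_pos s).le, mul_nonneg hq0 (Real.exp_pos s).le]
      · rw [h1]; simpa using Real.exp_pos s
    have h := bern_log_le hq0 hq1 hs
    have h2 : Real.log (1 - q + q * Real.exp s) ≤ s ^ 2 / 8 + q * s := by linarith
    have h3 : 1 - q + q * Real.exp s ≤ Real.exp (s ^ 2 / 8 + q * s) := by
      calc 1 - q + q * Real.exp s = Real.exp (Real.log (1 - q + q * Real.exp s)) :=
            (Real.exp_log hD).symm
        _ ≤ Real.exp (s ^ 2 / 8 + q * s) := Real.exp_le_exp.mpr h2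
    have expand : q * Real.exp (s * (1 - q)) + (1 - q) * Real.exp (-(s * q))
        = Real.exp (-(s * q)) * (1 - q + q * Real.exp s) := by
      have e1 : Real.exp (s * (1 - q)) = Real.exp (-(s * q)) * Real.exp s := by
        rw [← Real.exp_add]; ring_nf
      rw [e1]; ring
    rw [expand]
    calc Real.exp (-(s * q)) * (1 - q + q * Real.exp s)
        ≤ Real.exp (-(s * q)) * Real.exp (s ^ 2 / 8 + q * s) :=
          mul_le_mul_of_nonneg_left h3 (Real.exp_pos _).le
      _ = Real.exp (s ^ 2 / 8) := by rw [← Real.exp_add]; ring_nf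
  rcases le_or_gt 0 t with ht | ht
  · exact key p t hp0 hp1 ht
  · have h := key (1 - p) (-t) (by linarith) (by linarith) (by linarith)
    have e1 : (1 : ℝ) - (1 - p) = p := by ring
    rw [e1] at h
    calc p * Real.exp (t * (1 - p)) + (1 - p) * Real.exp (-(t * p))
        = (1 - p) * Real.exp (-t * p) + p * Real.exp (-(-t * (1 - p))) := by
          ring_nf
      _ ≤ Real.exp ((-t) ^ 2 / 8) := by
          have : (-t) * p = -t * p := rfl
          convert h using 3 <;> ring
      _ = Real.exp (t ^ 2 / 8) := by ring_nf

theorem integrable_exp_linear_gauss (b : ℝ) :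
    MeasureTheory.Integrable (fun z : ℝ => Real.exp (b * z - z ^ 2 / 2)) := by
  have h1 : MeasureTheory.Integrable (fun z : ℝ => Real.exp (-(1/2 : ℝ) * z ^ 2)) :=
    integrable_exp_neg_mul_sq (by norm_num)
  have h2 : MeasureTheory.Integrable (fun z : ℝ => Real.exp (-(1/2 : ℝ) * (z - b) ^ 2)) :=
    h1.comp_sub_right b
  have h3 := h2.const_mul (Real.exp (b ^ 2 / 2))
  refine h3.congr ?_
  filter_upwards with z
  rw [← Real.exp_add]
  congr 1
  ring

theorem integral_exp_linear_gauss (b : ℝ) :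
    (∫ z : ℝ, Real.exp (b * z - z ^ 2 / 2)) = Real.sqrt (2 * π) * Real.exp (b ^ 2 / 2) := by
  have e1 : ∀ z : ℝ, Real.exp (b * z - z ^ 2 / 2)
      = Real.exp (b ^ 2 / 2) * Real.exp (-(1/2 : ℝ) * (z - b) ^ 2) := by
    intro z; rw [← Real.exp_add]; congr 1; ring
  simp_rw [e1]
  rw [MeasureTheory.integral_const_mul]
  rw [MeasureTheory.integral_sub_right_eq_self (fun z : ℝ => Real.exp (-(1/2 : ℝ) * z ^ 2)) b]
  rw [integral_gaussian]
  rw [show π / (1/2 : ℝ) = 2 * π by ring]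
  ring

theorem expmoment_le {X : Type*} [Fintype X] [DecidableEq X] {k : ℕ}
    (u : X → Fin (k + 1) → ℝ) (hu0 : ∀ x j, 0 ≤ u x j) (hu1 : ∀ x, ∑ j, u x j = 1)
    (c : X → ℝ) (i : Fin (k + 1)) {s : ℝ} (hs : s = ∑ x, c x ^ 2) (hspos : 0 < s) :
    ∑ σ : X → Fin (k + 1), (∏ x, u x (σ x)) *
      Real.exp ((∑ x, ((if σ x = i then (1:ℝ) else 0) - u x i) * c x) ^ 2 / s) ≤ 3 := by
  set Z : (X → Fin (k + 1)) → ℝ :=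
    fun σ => ∑ x, ((if σ x = i then (1:ℝ) else 0) - u x i) * c x with hZ
  -- Step 1 : mgf bound
  have mgf : ∀ lam : ℝ,
      ∑ σ : X → Fin (k + 1), (∏ x, u x (σ x)) * Real.exp (lam * Z σ)
        ≤ Real.exp (lam ^ 2 * s / 8) := by
    intro lam
    have factor : ∀ σ : X → Fin (k + 1),
        (∏ x, u x (σ x)) * Real.exp (lam * Z σ)
          = ∏ x, (u x (σ x) * Real.exp (lam * (((if σ x = i then (1:ℝ) else 0) - u x i) * c x))) := by
      intro σ
      rw [Finset.prod_mul_distrib]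
      congr 1
      rw [← Real.exp_sum, hZ, Finset.mul_sum]
    simp_rw [factor]
    rw [← Fintype.prod_sum (fun x j => u x j * Real.exp (lam * (((if j = i then (1:ℝ) else 0) - u x i) * c x)))]
    have per_site : ∀ x : X,
        (∑ j, u x j * Real.exp (lam * (((if j = i then (1:ℝ) else 0) - u x i) * c x)))
          ≤ Real.exp ((lam * c x) ^ 2 / 8) := by
      intro x
      have hp0 := hu0 x i
      have hp1 : u x i ≤ 1 := by
        have := Finset.single_le_sum (f := fun j => u x j) (fun j _ => hu0 x j) (Finset.mem_univ i)
        rw [hu1 x] at this; exact this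
      have hsplit : (∑ j, u x j * Real.exp (lam * (((if j = i then (1:ℝ) else 0) - u x i) * c x)))
          = u x i * Real.exp (lam * c x * (1 - u x i))
            + (1 - u x i) * Real.exp (-(lam * c x * u x i)) := by
        rw [← Finset.add_sum_erase _ _ (Finset.mem_univ i)]
        congr 1
        · have hii : (if i = i then (1:ℝ) else 0) = 1 := by simp
          rw [hii]; ring_nf
        · have : ∀ j ∈ Finset.univ.erase i,
              u x j * Real.exp (lam * (((if j = i then (1:ℝ) else 0) - u x i) * c x))
                = u x j * Real.exp (-(lam * c x * u x i)) := by
            intro j hj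
            rw [if_neg (Finset.mem_erase.mp hj).1]
            ring_nf
          rw [Finset.sum_congr rfl this, ← Finset.sum_mul]
          have : ∑ j ∈ Finset.univ.erase i, u x j = 1 - u x i := by
            have := Finset.add_sum_erase Finset.univ (fun j => u x j) (Finset.mem_univ i)
            rw [hu1 x] at this
            linarith
          rw [this]
      rw [hsplit]
      exact bern_mgf hp0 hp1 (lam * c x)
    calc ∏ x, (∑ j, u x j * Real.exp (lam * (((if j = i then (1:ℝ) else 0) - u x i) * c x)))
        ≤ ∏ x, Real.exp ((lam * c x) ^ 2 / 8) := by
          apply Finset.prod_le_prod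
          · intro x _
            exact Finset.sum_nonneg fun j _ => mul_nonneg (hu0 x j) (Real.exp_pos _).le
          · intro x _; exact per_site x
      _ = Real.exp (lam ^ 2 * s / 8) := by
          rw [← Real.exp_sum]
          congr 1
          rw [hs, Finset.mul_sum, Finset.sum_div]
          exact Finset.sum_congr rfl fun x _ => by ring
  -- Step 2 : Gaussian linearization
  have hw0 : ∀ σ : X → Fin (k + 1), 0 ≤ ∏ x, u x (σ x) :=
    fun σ => Finset.prod_nonneg fun x _ => hu0 x (σ x)
  have h2s : (0:ℝ) ≤ 2 / s := by positivity
  have gauss_id : ∀ σ : X → Fin (k + 1),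
      Real.exp (Z σ ^ 2 / s)
        = (Real.sqrt (2 * π))⁻¹ * ∫ z : ℝ, Real.exp (Real.sqrt (2 / s) * Z σ * z - z ^ 2 / 2) := by
    intro σ
    rw [integral_exp_linear_gauss (Real.sqrt (2 / s) * Z σ)]
    rw [← mul_assoc, inv_mul_cancel₀ (by positivity : Real.sqrt (2 * π) ≠ 0), one_mul]
    congr 1
    rw [mul_pow, Real.sq_sqrt h2s]
    field_simp
  show ∑ σ : X → Fin (k + 1), (∏ x, u x (σ x)) * Real.exp (Z σ ^ 2 / s) ≤ 3
  simp_rw [gauss_id]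
  have swap : ∑ σ : X → Fin (k + 1), (∏ x, u x (σ x)) *
      ((Real.sqrt (2 * π))⁻¹ * ∫ z : ℝ, Real.exp (Real.sqrt (2 / s) * Z σ * z - z ^ 2 / 2))
      = (Real.sqrt (2 * π))⁻¹ *
        ∫ z : ℝ, ∑ σ : X → Fin (k + 1), (∏ x, u x (σ x)) * Real.exp (Real.sqrt (2 / s) * Z σ * z - z ^ 2 / 2) := by
    rw [MeasureTheory.integral_finset_sum _
      (fun σ _ => (integrable_exp_linear_gauss (Real.sqrt (2 / s) * Z σ)).const_mul _)]
    rw [Finset.mul_sum]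
    congr 1
    ext σ
    rw [MeasureTheory.integral_const_mul]
    ring
  rw [swap]
  -- Step 3 : pointwise bound and final computation
  have ptwise : ∀ z : ℝ,
      ∑ σ : X → Fin (k + 1), (∏ x, u x (σ x)) * Real.exp (Real.sqrt (2 / s) * Z σ * z - z ^ 2 / 2)
        ≤ Real.exp (-(1/4 : ℝ) * z ^ 2) := by
    intro z
    have e1 : ∀ σ : X → Fin (k + 1),
        Real.exp (Real.sqrt (2 / s) * Z σ * z - z ^ 2 / 2)
          = Real.exp ((Real.sqrt (2 / s) * z) * Z σ) * Real.exp (-(z ^ 2 / 2)) := by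
      intro σ; rw [← Real.exp_add]; congr 1; ring
    simp_rw [e1, ← mul_assoc, ← Finset.sum_mul]
    have h1 := mgf (Real.sqrt (2 / s) * z)
    calc (∑ σ : X → Fin (k + 1), (∏ x, u x (σ x)) * Real.exp ((Real.sqrt (2 / s) * z) * Z σ))
          * Real.exp (-(z ^ 2 / 2))
        ≤ Real.exp ((Real.sqrt (2 / s) * z) ^ 2 * s / 8) * Real.exp (-(z ^ 2 / 2)) := by
          apply mul_le_mul_of_nonneg_right h1 (Real.exp_pos _).le
      _ = Real.exp (-(1/4 : ℝ) * z ^ 2) := by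
          rw [← Real.exp_add]
          congr 1
          rw [mul_pow, Real.sq_sqrt h2s]
          field_simp
          ring
  have int_le : (∫ z : ℝ, ∑ σ : X → Fin (k + 1),
      (∏ x, u x (σ x)) * Real.exp (Real.sqrt (2 / s) * Z σ * z - z ^ 2 / 2))
      ≤ ∫ z : ℝ, Real.exp (-(1/4 : ℝ) * z ^ 2) := by
    apply MeasureTheory.integral_mono
    · exact MeasureTheory.integrable_finset_sum _
        (fun σ _ => (integrable_exp_linear_gauss (Real.sqrt (2 / s) * Z σ)).const_mul _)
    · exact integrable_exp_neg_mul_sq (by norm_num)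
    · exact ptwise
  have final : (Real.sqrt (2 * π))⁻¹ * ∫ z : ℝ, Real.exp (-(1/4 : ℝ) * z ^ 2) ≤ 3 := by
    rw [integral_gaussian]
    rw [show π / (1/4 : ℝ) = 4 * π by ring]
    rw [inv_mul_le_iff₀ (by positivity : (0:ℝ) < Real.sqrt (2 * π))]
    have h9 : (3:ℝ) = Real.sqrt 9 := by
      rw [show (9:ℝ) = 3 ^ 2 by norm_num, Real.sqrt_sq (by norm_num : (0:ℝ) ≤ 3)]
    rw [h9, ← Real.sqrt_mul (by positivity : (0:ℝ) ≤ 2 * π)]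
    apply Real.sqrt_le_sqrt
    nlinarith [pi_pos]
  calc (Real.sqrt (2 * π))⁻¹ * ∫ z : ℝ, ∑ σ : X → Fin (k + 1),
        (∏ x, u x (σ x)) * Real.exp (Real.sqrt (2 / s) * Z σ * z - z ^ 2 / 2)
      ≤ (Real.sqrt (2 * π))⁻¹ * ∫ z : ℝ, Real.exp (-(1/4 : ℝ) * z ^ 2) := by
        apply mul_le_mul_of_nonneg_left int_le (by positivity)
    _ ≤ 3 := final

theorem entropy_ineq {ι : Type*} [Fintype ι] [Nonempty ι] (ν μ : ι → ℝ)
    (hν0 : ∀ σ, 0 ≤ ν σ) (hν1 : ∑ σ, ν σ = 1)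
    (hμ0 : ∀ σ, 0 < μ σ) (hμ1 : ∑ σ, μ σ = 1) (g : ι → ℝ) :
    ∑ σ, ν σ * g σ ≤ ∑ σ, ν σ * Real.log (ν σ / μ σ) + Real.log (∑ σ, μ σ * Real.exp (g σ)) := by
  classical
  set w : ι → ℝ := fun σ => μ σ * Real.exp (g σ) with hw
  have hw0 : ∀ σ, 0 < w σ := fun σ => mul_pos (hμ0 σ) (Real.exp_pos _)
  set cc : ℝ := ∑ σ, w σ with hcc
  have hccpos : 0 < cc := Finset.sum_pos (fun σ _ => hw0 σ) Finset.univ_nonempty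
  have term : ∀ σ, ν σ * g σ - ν σ * Real.log (ν σ / μ σ)
      ≤ w σ / cc - ν σ + ν σ * Real.log cc := by
    intro σ
    rcases eq_or_lt_of_le (hν0 σ) with h0 | h0
    · rw [← h0]; simp
      exact div_nonneg (hw0 σ).le hccpos.le
    · have hr : 0 < w σ / (ν σ * cc) := div_pos (hw0 σ) (mul_pos h0 hccpos)
      have hlog : Real.log (w σ / (ν σ * cc)) ≤ w σ / (ν σ * cc) - 1 :=
        Real.log_le_sub_one_of_pos hr
      have e1 : ν σ * g σ - ν σ * Real.log (ν σ / μ σ)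
          = ν σ * (Real.log (w σ / (ν σ * cc)) + Real.log cc) := by
        rw [Real.log_div (ne_of_gt h0) (ne_of_gt (hμ0 σ)),
          Real.log_div (ne_of_gt (hw0 σ)) (mul_pos h0 hccpos).ne',
          Real.log_mul (ne_of_gt (hμ0 σ)) (ne_of_gt (Real.exp_pos _)),
          Real.log_exp, Real.log_mul (ne_of_gt h0) (ne_of_gt hccpos)]
        ring
      rw [e1]
      have e2 : ν σ * (w σ / (ν σ * cc)) = w σ / cc := by
        field_simp
      calc ν σ * (Real.log (w σ / (ν σ * cc)) + Real.log cc)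
          ≤ ν σ * ((w σ / (ν σ * cc) - 1) + Real.log cc) := by
            apply mul_le_mul_of_nonneg_left _ (le_of_lt h0)
            linarith
        _ = w σ / cc - ν σ + ν σ * Real.log cc := by
            rw [mul_add, mul_sub, e2]; ring
  have hsum := Finset.sum_le_sum (fun σ (_ : σ ∈ Finset.univ) => term σ)
  rw [Finset.sum_sub_distrib] at hsum
  have e3 : ∑ σ, (w σ / cc - ν σ + ν σ * Real.log cc) = Real.log cc := by
    rw [Finset.sum_add_distrib, Finset.sum_sub_distrib, ← Finset.sum_div, ← hcc,
      div_self (ne_of_gt hccpos), hν1, ← Finset.sum_mul, hν1, one_mul]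
    ring
  rw [e3] at hsum
  linarith

end Analytic

section MatrixODE


theorem Amat_split {k : ℕ} (hk : 1 ≤ k) (a : ℝ) (i j : Fin (k + 1)) :
    Amat k a i j = (if (i : ℕ) = 0 ∧ (j : ℕ) = k then a else 0)
      + (if (i : ℕ) = k ∧ (j : ℕ) = k then -a else 0) := by
  unfold Amat
  have hk0 : ¬((0:ℕ) = k) := by omega
  by_cases h1 : (i : ℕ) = 0 ∧ (j : ℕ) = k
  · have h2 : ¬((i : ℕ) = k ∧ (j : ℕ) = k) := by
      rintro ⟨hik, -⟩; omega
    simp [h1, h2, hk0]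
  · by_cases h2 : (i : ℕ) = k ∧ (j : ℕ) = k
    · have h1' : ¬((i : ℕ) = 0) := by omega
      simp [h1, h2, h1', hk0]
      rw [if_neg (by omega : ¬(k = 0)), if_neg (by omega : ¬(k = 0))]
      ring
    · simp [h1, h2]

theorem Amat_colsum {k : ℕ} (hk : 1 ≤ k) (a : ℝ) (j : Fin (k + 1)) :
    ∑ i, Amat k a i j = 0 := by
  simp_rw [Amat_split hk a]
  rw [Finset.sum_add_distrib]
  have e1 : ∑ i : Fin (k + 1), (if (i : ℕ) = 0 ∧ (j : ℕ) = k then a else 0)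
      = if (j : ℕ) = k then a else 0 := by
    rw [Finset.sum_eq_single_of_mem (0 : Fin (k + 1)) (Finset.mem_univ _)]
    · simp
    · intro i _ hi
      rw [if_neg]
      rintro ⟨hi0, -⟩
      exact hi (Fin.ext hi0)
  have e2 : ∑ i : Fin (k + 1), (if (i : ℕ) = k ∧ (j : ℕ) = k then -a else 0)
      = if (j : ℕ) = k then -a else 0 := by
    rw [Finset.sum_eq_single_of_mem (Fin.last k) (Finset.mem_univ _)]
    · simp
    · intro i _ hi
      rw [if_neg]
      rintro ⟨hik, -⟩
      exact hi (Fin.ext (by simpa using hik))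
  rw [e1, e2]
  by_cases hj : (j : ℕ) = k <;> simp [hj]

theorem Mmat_colsum {k : ℕ} (j : Fin (k + 1)) : ∑ i, Mmat k i j = 0 := by
  unfold Mmat
  rw [Finset.sum_add_distrib]
  have e1 : ∑ i : Fin (k + 1), (if 1 ≤ (i : ℕ) ∧ (j : ℕ) = (i : ℕ) - 1 then (1:ℝ) else 0)
      = if (j : ℕ) < k then 1 else 0 := by
    by_cases hj : (j : ℕ) < k
    · rw [Finset.sum_eq_single_of_mem (⟨(j : ℕ) + 1, by omega⟩ : Fin (k + 1)) (Finset.mem_univ _)]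
      · rw [if_pos ⟨by simp, by simp⟩, if_pos hj]
      · intro i _ hi
        rw [if_neg]
        rintro ⟨hi1, hij⟩
        exact hi (Fin.ext (by simp; omega))
    · rw [if_neg hj, Finset.sum_eq_zero]
      intro i _
      rw [if_neg]
      rintro ⟨hi1, hij⟩
      have := i.isLt
      omega
  have e2 : ∑ i : Fin (k + 1), (if (i : ℕ) < k ∧ j = i then (-1:ℝ) else 0)
      = if (j : ℕ) < k then -1 else 0 := by
    rw [Finset.sum_eq_single_of_mem j (Finset.mem_univ _)]
    · by_cases hj : (j : ℕ) < k <;> simp [hj]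
    · intro i _ hi
      rw [if_neg]
      rintro ⟨-, hij⟩
      exact hi hij.symm
  rw [e1, e2]
  by_cases hj : (j : ℕ) < k <;> simp [hj]

-- mulVec lower bounds

theorem Amat_mulVec_ge {k : ℕ} (hk : 1 ≤ k) {a : ℝ} (ha : 0 ≤ a) (u : Fin (k + 1) → ℝ)
    (hu : ∀ j, 0 ≤ u j) (i : Fin (k + 1)) :
    -(a * u i) ≤ (Amat k a).mulVec u i := by
  unfold Matrix.mulVec dotProduct
  by_cases hik : (i : ℕ) = k
  · have hlast : i = Fin.last k := Fin.ext (by simpa using hik)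
    have : ∑ j, Amat k a i j * u j = -(a * u i) := by
      rw [Finset.sum_eq_single_of_mem (Fin.last k) (Finset.mem_univ _)]
      · rw [Amat_split hk, if_neg (by rintro ⟨h0, -⟩; omega), if_pos ⟨hik, by simp⟩]
        rw [← hlast]
        ring
      · intro j _ hj
        rw [Amat_split hk, if_neg (by rintro ⟨-, hjk⟩; exact hj (Fin.ext (by simpa using hjk))),
          if_neg (by rintro ⟨-, hjk⟩; exact hj (Fin.ext (by simpa using hjk)))]
        ring
    rw [this]
  · have : 0 ≤ ∑ j, Amat k a i j * u j := by
      apply Finset.sum_nonneg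
      intro j _
      rw [Amat_split hk]
      by_cases h1 : (i : ℕ) = 0 ∧ (j : ℕ) = k
      · rw [if_pos h1, if_neg (by rintro ⟨h2, -⟩; omega)]
        simpa using mul_nonneg ha (hu j)
      · rw [if_neg h1, if_neg (by rintro ⟨h2, -⟩; omega)]
        simp
    have h2 : -(a * u i) ≤ 0 := neg_nonpos_of_nonneg (mul_nonneg ha (hu i))
    linarith

theorem Mmat_mulVec_ge {k : ℕ} (u : Fin (k + 1) → ℝ) (hu : ∀ j, 0 ≤ u j) (i : Fin (k + 1)) :
    -(u i) ≤ (Mmat k).mulVec u i := by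
  unfold Matrix.mulVec dotProduct Mmat
  have e : ∑ j : Fin (k + 1), ((if 1 ≤ (i : ℕ) ∧ (j : ℕ) = (i : ℕ) - 1 then (1:ℝ) else 0)
      + (if (i : ℕ) < k ∧ j = i then (-1:ℝ) else 0)) * u j
      = (∑ j : Fin (k + 1), (if 1 ≤ (i : ℕ) ∧ (j : ℕ) = (i : ℕ) - 1 then (1:ℝ) else 0) * u j)
        + ∑ j : Fin (k + 1), (if (i : ℕ) < k ∧ j = i then (-1:ℝ) else 0) * u j := by
    rw [← Finset.sum_add_distrib]
    exact Finset.sum_congr rfl fun j _ => by ring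
  rw [e]
  have h1 : 0 ≤ ∑ j : Fin (k + 1), (if 1 ≤ (i : ℕ) ∧ (j : ℕ) = (i : ℕ) - 1 then (1:ℝ) else 0) * u j := by
    apply Finset.sum_nonneg
    intro j _
    by_cases h : 1 ≤ (i : ℕ) ∧ (j : ℕ) = (i : ℕ) - 1 <;> simp [h, hu j]
  have h2 : ∑ j : Fin (k + 1), (if (i : ℕ) < k ∧ j = i then (-1:ℝ) else 0) * u j
      = if (i : ℕ) < k then -(u i) else 0 := by
    rw [Finset.sum_eq_single_of_mem i (Finset.mem_univ _)]
    · by_cases h : (i : ℕ) < k <;> simp [h]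
    · intro j _ hj
      rw [if_neg (by rintro ⟨-, hji⟩; exact hj hji)]
      ring
  rw [h2]
  by_cases h : (i : ℕ) < k
  · rw [if_pos h]; linarith
  · rw [if_neg h]
    have := neg_nonpos_of_nonneg (hu i)
    linarith

theorem deriv_sum_zero {k : ℕ} (hk : 1 ≤ k) (a : ℝ) (v : Fin (k + 1) → ℝ) (c : ℝ) :
    ∑ i, ((Amat k a).mulVec v i + c * (Mmat k).mulVec v i) = 0 := by
  rw [Finset.sum_add_distrib, ← Finset.mul_sum]
  have hA : ∑ i, (Amat k a).mulVec v i = 0 := by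
    unfold Matrix.mulVec dotProduct
    rw [Finset.sum_comm]
    apply Finset.sum_eq_zero
    intro j _
    rw [← Finset.sum_mul, Amat_colsum hk a j, zero_mul]
  have hM : ∑ i, (Mmat k).mulVec v i = 0 := by
    unfold Matrix.mulVec dotProduct
    rw [Finset.sum_comm]
    apply Finset.sum_eq_zero
    intro j _
    rw [← Finset.sum_mul, Mmat_colsum j, zero_mul]
  rw [hA, hM, mul_zero, add_zero]

section ODE

variable {d k n : ℕ} {a : ℝ} {J : (Fin d → ℝ) → (Fin d → ℝ) → ℝ}
  {un : ℝ → Site d n → Fin (k + 1) → ℝ}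

theorem un_sum_one (hk : 1 ≤ k)
    (u₀ : (Fin d → ℝ) → Fin (k + 1) → ℝ)
    (hu₀prob : ∀ x, ∑ i, u₀ x i = 1)
    (hun_init : ∀ x, un 0 x = u₀ (emb d n x))
    (hun_sol : ∀ t ∈ Set.Ici (0 : ℝ), ∀ x i,
      HasDerivWithinAt (fun s => un s x i)
        ((Amat k a).mulVec (un t x) i +
          convn d n J (fun y => un t y (Fin.last k)) x * (Mmat k).mulVec (un t x) i)
        (Set.Ici 0) t) :
    ∀ T, 0 ≤ T → ∀ x, ∑ i, un T x i = 1 := by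
  intro T hT x
  set g : ℝ → ℝ := fun s => ∑ i, un s x i with hg
  have hgd : ∀ s ∈ Set.Ici (0:ℝ), HasDerivWithinAt g 0 (Set.Ici 0) s := by
    intro s hs
    have h1 : HasDerivWithinAt g
        (∑ i, ((Amat k a).mulVec (un s x) i +
          convn d n J (fun y => un s y (Fin.last k)) x * (Mmat k).mulVec (un s x) i))
        (Set.Ici 0) s := HasDerivWithinAt.fun_sum fun i _ => hun_sol s hs x i
    rwa [deriv_sum_zero hk] at h1
  have hgc : ContinuousOn g (Set.Icc 0 T) := fun s hs =>
    ((hgd s hs.1).continuousWithinAt).mono (Set.Icc_subset_Ici_self)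
  have hconst := constant_of_has_deriv_right_zero hgc
    (fun s hs => (hgd s hs.1).mono (Set.Ici_subset_Ici.mpr hs.1))
    T (Set.right_mem_Icc.mpr hT)
  show g T = 1
  rw [hconst]
  show ∑ i, un 0 x i = 1
  rw [hun_init x]
  exact hu₀prob (emb d n x)

theorem un_pos (hk : 1 ≤ k) (ha : 0 < a)
    (hJnonneg : ∀ x y, 0 ≤ J x y) (hJbdd : ∃ CJ : ℝ, ∀ x y, J x y ≤ CJ)
    {ε : ℝ} (hε : 0 < ε)
    (u₀ : (Fin d → ℝ) → Fin (k + 1) → ℝ)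
    (hu₀prob : ∀ x, ∑ i, u₀ x i = 1)
    (hu₀eps : ∀ x i, u₀ x i ∈ Set.Icc ε (1 - ε))
    (hn : 1 ≤ n)
    (hun_init : ∀ x, un 0 x = u₀ (emb d n x))
    (hun_sol : ∀ t ∈ Set.Ici (0 : ℝ), ∀ x i,
      HasDerivWithinAt (fun s => un s x i)
        ((Amat k a).mulVec (un t x) i +
          convn d n J (fun y => un t y (Fin.last k)) x * (Mmat k).mulVec (un t x) i)
        (Set.Ici 0) t) :
    ∀ T, 0 ≤ T → ∀ x i, 0 < un T x i := by
  classical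
  obtain ⟨CJ₀, hCJ₀⟩ := hJbdd
  set CJ : ℝ := max CJ₀ 0 with hCJdef
  have hCJnn : 0 ≤ CJ := le_max_right _ _
  have hJle : ∀ x y, J x y ≤ CJ := fun x y => (hCJ₀ x y).trans (le_max_left _ _)
  set K : ℝ := a + CJ with hKdef
  have hKnn : 0 ≤ K := by positivity
  by_contra hcon
  push_neg at hcon
  obtain ⟨T, hT, x0, i0, hle⟩ := hcon
  -- the bad set
  set bad : Set ℝ := ⋃ (x : Site d n), ⋃ (i : Fin (k + 1)),
    {t | t ∈ Set.Icc 0 T ∧ un t x i ≤ 0} with hbad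
  have hcont : ∀ (x : Site d n) (i : Fin (k + 1)),
      ContinuousOn (fun s => un s x i) (Set.Ici 0) := fun x i s hs =>
    (hun_sol s hs x i).continuousWithinAt
  have hbadclosed : IsClosed bad := by
    apply isClosed_iUnion_of_finite
    intro x
    apply isClosed_iUnion_of_finite
    intro i
    have : {t | t ∈ Set.Icc 0 T ∧ un t x i ≤ 0}
        = Set.Icc 0 T ∩ (fun s => un s x i) ⁻¹' (Set.Iic 0) := by
      ext t
      simp only [Set.mem_setOf_eq, Set.mem_inter_iff, Set.mem_preimage, Set.mem_Iic]
    rw [this]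
    exact ContinuousOn.preimage_isClosed_of_isClosed
      ((hcont x i).mono (Set.Icc_subset_Ici_self)) isClosed_Icc isClosed_Iic
  have hbadne : bad.Nonempty := by
    refine ⟨T, ?_⟩
    simp only [hbad, Set.mem_iUnion]
    exact ⟨x0, i0, ⟨Set.right_mem_Icc.mpr hT, hle⟩⟩
  have hbadbdd : BddBelow bad := by
    refine ⟨0, fun t ht => ?_⟩
    simp only [hbad, Set.mem_iUnion] at ht
    obtain ⟨x, i, ht, -⟩ := ht
    exact ht.1
  set t1 : ℝ := sInf bad with ht1
  have ht1mem : t1 ∈ bad := hbadclosed.csInf_mem hbadne hbadbdd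
  obtain ⟨x1, i1, ht1Icc, hneg⟩ : ∃ x i, t1 ∈ Set.Icc 0 T ∧ un t1 x i ≤ 0 := by
    simpa [hbad, Set.mem_iUnion] using ht1mem
  have hinit_pos : ∀ x i, 0 < un 0 x i := by
    intro x i
    rw [hun_init x]
    exact lt_of_lt_of_le hε (hu₀eps (emb d n x) i).1
  have ht1pos : 0 < t1 := by
    rcases lt_or_eq_of_le ht1Icc.1 with h | h
    · exact h
    · exfalso; rw [← h] at hneg; exact absurd hneg (not_le.mpr (hinit_pos x1 i1))
  have hlt : ∀ s, 0 ≤ s → s < t1 → ∀ x i, 0 < un s x i := by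
    intro s hs hst x i
    by_contra hc
    push_neg at hc
    have : s ∈ bad := by
      simp only [hbad, Set.mem_iUnion]
      exact ⟨x, i, ⟨⟨hs, hst.le.trans ht1Icc.2⟩, hc⟩⟩
    exact absurd (csInf_le hbadbdd this) (not_le.mpr hst)
  have hsum1 := un_sum_one hk u₀ hu₀prob hun_init hun_sol
  -- pointwise bounds on [0, t1)
  have hub : ∀ s, 0 ≤ s → s < t1 → ∀ y, un s y (Fin.last k) ≤ 1 := by
    intro s hs hst y
    have h1 := hsum1 s hs y
    have h2 : ∀ i, 0 ≤ un s y i := fun i => (hlt s hs hst y i).le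
    calc un s y (Fin.last k) ≤ ∑ i, un s y i :=
          Finset.single_le_sum (f := fun i => un s y i) (fun i _ => h2 i) (Finset.mem_univ _)
      _ = 1 := h1
  have hcbound : ∀ s, 0 ≤ s → s < t1 → ∀ x,
      0 ≤ convn d n J (fun y => un s y (Fin.last k)) x ∧
      convn d n J (fun y => un s y (Fin.last k)) x ≤ CJ := by
    intro s hs hst x
    constructor
    · apply mul_nonneg (by positivity)
      apply Finset.sum_nonneg
      intro y _
      exact mul_nonneg (hJnonneg _ _) (hlt s hs hst y _).le
    · unfold convn
      have hcard : (Fintype.card (Site d n) : ℝ) = (n : ℝ) ^ d := by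
        rw [show Fintype.card (Site d n) = n ^ d by
          simp [Fintype.card_fun]]
        push_cast; ring
      have hsum : ∑ y : Site d n, J (emb d n x) (emb d n y) * un s y (Fin.last k)
          ≤ ∑ y : Site d n, CJ := by
        apply Finset.sum_le_sum
        intro y _
        calc J (emb d n x) (emb d n y) * un s y (Fin.last k)
            ≤ CJ * 1 := by
              apply mul_le_mul (hJle _ _) (hub s hs hst y) (hlt s hs hst y _).le hCJnn
          _ = CJ := mul_one CJ
      have hnd : (0:ℝ) < (n:ℝ) ^ d := by
        have : (0:ℝ) < (n:ℝ) := by exact_mod_cast hn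
        positivity
      calc (1 / (n : ℝ) ^ d) * ∑ y : Site d n, J (emb d n x) (emb d n y) * un s y (Fin.last k)
          ≤ (1 / (n : ℝ) ^ d) * ∑ y : Site d n, CJ := by
            apply mul_le_mul_of_nonneg_left hsum (by positivity)
        _ = CJ := by
            rw [Finset.sum_const, Finset.card_univ, nsmul_eq_mul, hcard]
            field_simp
  -- Gronwall-type estimate on [0, t1)
  have claim : ∀ s', 0 ≤ s' → s' < t1 → ∀ x i, ε ≤ Real.exp (K * s') * un s' x i := by
    intro s' hs' hst x i
    set f : ℝ → ℝ := fun r => -(Real.exp (K * r) * un r x i) with hf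
    set f' : ℝ → ℝ := fun r => -(K * Real.exp (K * r) * un r x i + Real.exp (K * r) *
      ((Amat k a).mulVec (un r x) i +
        convn d n J (fun y => un r y (Fin.last k)) x * (Mmat k).mulVec (un r x) i)) with hf'
    have hfd0 : ∀ r ∈ Set.Ici (0:ℝ), HasDerivWithinAt f (f' r) (Set.Ici 0) r := by
      intro r hr
      have hlin : HasDerivAt (fun u : ℝ => K * u) K r := by
        simpa using (hasDerivAt_id r).const_mul K
      have he := hlin.exp
      have hu := hun_sol r hr x i
      have hprod := (he.hasDerivWithinAt.mul hu).neg
      refine hprod.congr_deriv ?_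
      simp only [hf']
      ring
    have hfd : ∀ r ∈ Set.Ici (0:ℝ), HasDerivWithinAt f (f' r) (Set.Ici r) r :=
      fun r hr => (hfd0 r hr).mono (Set.Ici_subset_Ici.mpr hr)
    have hfc : ContinuousOn f (Set.Icc 0 s') := fun r hr =>
      ((hfd0 r hr.1).continuousWithinAt).mono
        (fun z hz => hz.1)
    have hbound : ∀ r ∈ Set.Ico 0 s', f' r ≤ 0 := by
      intro r hr
      have hrt1 : r < t1 := lt_trans hr.2 hst
      have hpos : ∀ j, 0 ≤ un r x j := fun j => (hlt r hr.1 hrt1 x j).le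
      obtain ⟨hc0, hcC⟩ := hcbound r hr.1 hrt1 x
      set c := convn d n J (fun y => un r y (Fin.last k)) x
      set v := un r x
      have hA := Amat_mulVec_ge hk ha.le v hpos i
      have hM := Mmat_mulVec_ge v hpos i
      have h1 : c * (Mmat k).mulVec v i ≥ -(CJ * v i) := by
        calc c * (Mmat k).mulVec v i ≥ c * (-(v i)) := by
              apply mul_le_mul_of_nonneg_left hM hc0
          _ = -(c * v i) := by ring
          _ ≥ -(CJ * v i) := by
              have : c * v i ≤ CJ * v i := mul_le_mul_of_nonneg_right hcC (hpos i)
              linarith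
      have h2 : (Amat k a).mulVec v i + c * (Mmat k).mulVec v i ≥ -(K * v i) := by
        rw [hKdef]
        have : -(a * v i) + -(CJ * v i) = -((a + CJ) * v i) := by ring
        linarith
      simp only [hf', neg_nonpos]
      have hexp : 0 < Real.exp (K * r) := Real.exp_pos _
      nlinarith [hpos i]
    have hB := image_le_of_deriv_right_le_deriv_boundary hfc
      (fun r hr => hfd r hr.1)
      (show f 0 ≤ (fun _ : ℝ => -ε) 0 by
        have hinit : ε ≤ un 0 x i := by rw [hun_init x]; exact (hu₀eps (emb d n x) i).1
        show -(Real.exp (K * 0) * un 0 x i) ≤ -ε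
        rw [mul_zero, Real.exp_zero, one_mul]
        linarith)
      (continuousOn_const)
      (fun r _ => (hasDerivAt_const r (-ε : ℝ)).hasDerivWithinAt)
      (fun r hr => by simpa using hbound r hr)
      (Set.right_mem_Icc.mpr hs')
    simp only [hf] at hB
    linarith
  -- pass to the limit at t1
  have hclos : t1 ∈ closure (Set.Ico (0:ℝ) t1) := by
    rw [closure_Ico (ne_of_lt ht1pos)]
    exact Set.right_mem_Icc.mpr ht1pos.le
  haveI hne : (nhdsWithin t1 (Set.Ico (0:ℝ) t1)).NeBot :=
    mem_closure_iff_nhdsWithin_neBot.mp hclos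
  have htend : Filter.Tendsto (fun s => Real.exp (K * s) * un s x1 i1)
      (nhdsWithin t1 (Set.Ico (0:ℝ) t1)) (nhds (Real.exp (K * t1) * un t1 x1 i1)) := by
    have h1 : ContinuousWithinAt (fun s => Real.exp (K * s) * un s x1 i1) (Set.Ici 0) t1 :=
      ((Real.continuous_exp.comp (continuous_const.mul continuous_id)).continuousWithinAt).mul
        (hcont x1 i1 t1 ht1Icc.1)
    exact (h1.mono (fun z hz => hz.1)).tendsto
  have hge : ε ≤ Real.exp (K * t1) * un t1 x1 i1 := by
    apply ge_of_tendsto htend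
    filter_upwards [self_mem_nhdsWithin] with s hs
    exact claim s hs.1 hs.2 x1 i1
  have : 0 < un t1 x1 i1 := by
    have hexp : 0 < Real.exp (K * t1) := Real.exp_pos _
    nlinarith
  exact absurd hneg (not_le.mpr this)

end ODE


end MatrixODE

section GenLemmas

variable {d n k : ℕ} {a : ℝ} {J : (Fin d → ℝ) → (Fin d → ℝ) → ℝ}

theorem rate_nonneg (ha : 0 ≤ a) (hJ : ∀ x y, 0 ≤ J x y) (x : Site d n) (σ : Conf d n k) :
    0 ≤ rate d n k a J x σ := by
  unfold rate
  apply add_nonneg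
  · apply mul_nonneg ha
    split <;> norm_num
  · apply mul_nonneg (by positivity)
    apply Finset.sum_nonneg
    intro y _
    apply mul_nonneg (hJ _ _)
    split <;> norm_num

theorem gen_offdiag (ha : 0 ≤ a) (hJ : ∀ x y, 0 ≤ J x y) (σ τ : Conf d n k) (hστ : τ ≠ σ) :
    0 ≤ gen d n k a J σ τ := by
  unfold gen
  apply Finset.sum_nonneg
  intro x _
  rw [if_neg hστ, sub_zero]
  apply mul_nonneg (rate_nonneg ha hJ x σ)
  split <;> norm_num

theorem gen_rowsum (σ : Conf d n k) : ∑ τ, gen d n k a J σ τ = 0 := by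
  unfold gen
  rw [Finset.sum_comm]
  apply Finset.sum_eq_zero
  intro x _
  rw [← Finset.mul_sum, Finset.sum_sub_distrib]
  rw [Finset.sum_ite_eq' Finset.univ (flipUp x σ) (fun _ => (1:ℝ)),
    Finset.sum_ite_eq' Finset.univ σ (fun _ => (1:ℝ))]
  simp

end GenLemmas

/-- **ℓ²-version of the optimal quantitative bound** (Remark after Theorem 1). -/
theorem ell2_bound
    (d k : ℕ) (hd : 1 ≤ d) (hk : 1 ≤ k) (a : ℝ) (ha : 0 < a)
    (J : (Fin d → ℝ) → (Fin d → ℝ) → ℝ)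
    (hJmeas : Measurable (Function.uncurry J))
    (hJnonneg : ∀ x y, 0 ≤ J x y)
    (hJbdd : ∃ CJ : ℝ, ∀ x y, J x y ≤ CJ)
    (hJper : ∀ (x y : Fin d → ℝ) (mx my : Fin d → ℤ),
      J (x + fun j => (mx j : ℝ)) (y + fun j => (my j : ℝ)) = J x y)
    (ε : ℝ) (hε : 0 < ε)
    (u₀ : (Fin d → ℝ) → Fin (k + 1) → ℝ)
    (hu₀C2 : ContDiff ℝ 2 u₀) (hu₀per : Periodic1 d u₀)
    (hu₀prob : ∀ x, ∑ i, u₀ x i = 1)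
    (hu₀eps : ∀ x i, u₀ x i ∈ Set.Icc ε (1 - ε))
    (n : ℕ) (hn : 1 ≤ n)
    -- `uⁿ` is the solution of the discretized equation with initial condition `u₀(·/n)`
    (un : ℝ → Site d n → Fin (k + 1) → ℝ)
    (hun_init : ∀ x, un 0 x = u₀ (emb d n x))
    (hun_sol : ∀ t ∈ Set.Ici (0 : ℝ), ∀ x i,
      HasDerivWithinAt (fun s => un s x i)
        ((Amat k a).mulVec (un t x) i +
          convn d n J (fun y => un t y (Fin.last k)) x * (Mmat k).mulVec (un t x) i)
        (Set.Ici 0) t) :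
    ∀ f : (Fin d → ℝ) → ℝ, ∀ i : Fin (k + 1), ∀ t : ℝ, 0 ≤ t →
      (∑ σ : Conf d n k,
        law d n k a J (profile d n k fun x => u₀ (emb d n x)) t σ *
          ((1 / (n : ℝ) ^ d) * ∑ x : Site d n,
            ((if σ x = i then (1 : ℝ) else 0) - un t x i) * f (emb d n x)) ^ 2)
      ≤ ((1 / (n : ℝ) ^ (2 * d)) * ∑ x : Site d n, f (emb d n x) ^ 2) *
          ((∑ σ : Conf d n k,
              law d n k a J (profile d n k fun x => u₀ (emb d n x)) t σ *
                Real.log (law d n k a J (profile d n k fun x => u₀ (emb d n x)) t σ /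
                  profile d n k (un t) σ)) + Real.log 3) := by
  intro f i t ht
  classical
  -- abbreviations
  set μ₀ : Conf d n k → ℝ := profile d n k fun x => u₀ (emb d n x) with hμ₀def
  set ν : Conf d n k → ℝ := law d n k a J μ₀ t with hνdef
  set μt : Conf d n k → ℝ := profile d n k (un t) with hμtdef
  -- positivity and normalization of `un t`
  have hupos : ∀ x j, 0 < un t x j :=
    un_pos hk ha hJnonneg hJbdd hε u₀ hu₀prob hu₀eps hn hun_init hun_sol t ht
  have husum : ∀ x, ∑ j, un t x j = 1 := fun x => un_sum_one hk u₀ hu₀prob hun_init hun_sol t ht x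
  have hμtpos : ∀ σ, 0 < μt σ := fun σ => Finset.prod_pos fun x _ => hupos x (σ x)
  have hμtsum : ∑ σ, μt σ = 1 := by
    have : ∑ σ : Conf d n k, μt σ = ∑ σ : Conf d n k, ∏ x, un t x (σ x) := rfl
    rw [this, ← Fintype.prod_sum (fun x j => un t x j)]
    simp [husum]
  -- properties of `ν`
  have hμ₀nn : ∀ σ, 0 ≤ μ₀ σ := fun σ =>
    Finset.prod_nonneg fun x _ => le_trans hε.le (hu₀eps (emb d n x) (σ x)).1
  have hμ₀sum : ∑ σ, μ₀ σ = 1 := by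
    have : ∑ σ : Conf d n k, μ₀ σ = ∑ σ : Conf d n k, ∏ x, u₀ (emb d n x) (σ x) := rfl
    rw [this, ← Fintype.prod_sum (fun x j => u₀ (emb d n x) j)]
    simp [hu₀prob]
  have hexpnn : ∀ σ' σ : Conf d n k, 0 ≤ (NormedSpace.exp (t • gen d n k a J)) σ' σ := by
    intro σ' σ
    apply exp_metzler_nonneg
    intro p q hpq
    have he : (t • gen d n k a J) p q = t * gen d n k a J p q := rfl
    rw [he]
    exact mul_nonneg ht (gen_offdiag ha.le hJnonneg p q (Ne.symm hpq))
  have hexprow : ∀ σ' : Conf d n k, ∑ σ, (NormedSpace.exp (t • gen d n k a J)) σ' σ = 1 := by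
    intro σ'
    apply exp_rowsum
    intro p
    have he : ∀ q, (t • gen d n k a J) p q = t * gen d n k a J p q := fun q => rfl
    simp_rw [he, ← Finset.mul_sum, gen_rowsum, mul_zero]
  have hν0 : ∀ σ, 0 ≤ ν σ := by
    intro σ
    apply Finset.sum_nonneg
    intro σ' _
    exact mul_nonneg (hμ₀nn σ') (hexpnn σ' σ)
  have hν1 : ∑ σ, ν σ = 1 := by
    have : ∑ σ, ν σ = ∑ σ' : Conf d n k, ∑ σ : Conf d n k,
        μ₀ σ' * (NormedSpace.exp (t • gen d n k a J)) σ' σ := Finset.sum_comm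
    rw [this]
    calc ∑ σ' : Conf d n k, ∑ σ : Conf d n k,
          μ₀ σ' * (NormedSpace.exp (t • gen d n k a J)) σ' σ
        = ∑ σ' : Conf d n k, μ₀ σ' * ∑ σ : Conf d n k,
            (NormedSpace.exp (t • gen d n k a J)) σ' σ := by
          exact Finset.sum_congr rfl fun σ' _ => (Finset.mul_sum _ _ _).symm
      _ = ∑ σ' : Conf d n k, μ₀ σ' := by
          exact Finset.sum_congr rfl fun σ' _ => by rw [hexprow σ', mul_one]
      _ = 1 := hμ₀sum
  -- the linear statistic
  set c : Site d n → ℝ := fun x => f (emb d n x) / (n : ℝ) ^ d with hcdef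
  have hZeq : ∀ σ : Conf d n k,
      (1 / (n : ℝ) ^ d) * (∑ x, ((if σ x = i then (1:ℝ) else 0) - un t x i) * f (emb d n x))
        = ∑ x, ((if σ x = i then (1:ℝ) else 0) - un t x i) * c x := by
    intro σ
    rw [Finset.mul_sum]
    exact Finset.sum_congr rfl fun x _ => by rw [hcdef]; ring
  have hnpos : (0:ℝ) < (n : ℝ) := by exact_mod_cast hn
  have hSeq : (1 / (n : ℝ) ^ (2 * d)) * ∑ x, f (emb d n x) ^ 2 = ∑ x, c x ^ 2 := by
    rw [Finset.mul_sum]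
    apply Finset.sum_congr rfl
    intro x _
    have hpow : ((n:ℝ) ^ d) ^ 2 = (n:ℝ) ^ (2 * d) := by
      rw [← pow_mul, mul_comm]
    rw [hcdef]
    simp only
    rw [div_pow, hpow]
    ring
  simp only [hZeq]
  rw [hSeq]
  have hS0 : (0:ℝ) ≤ ∑ x, c x ^ 2 := Finset.sum_nonneg fun x _ => sq_nonneg _
  rcases eq_or_lt_of_le hS0 with hS | hSpos
  · -- degenerate case : all `c x` vanish
    have hc0 : ∀ x, c x = 0 := by
      intro x
      have h1 := (Finset.sum_eq_zero_iff_of_nonneg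
        (fun x (_ : x ∈ Finset.univ) => sq_nonneg (c x))).mp hS.symm x (Finset.mem_univ x)
      exact (pow_eq_zero_iff two_ne_zero).mp h1
    have hZ0 : ∀ σ : Conf d n k,
        ∑ x, ((if σ x = i then (1:ℝ) else 0) - un t x i) * c x = 0 := by
      intro σ
      apply Finset.sum_eq_zero
      intro x _
      rw [hc0 x, mul_zero]
    simp only [hZ0, ← hS]
    simp
  · -- main case
    have hmoment : ∑ σ : Conf d n k, (∏ x, un t x (σ x)) *
        Real.exp ((∑ x, ((if σ x = i then (1:ℝ) else 0) - un t x i) * c x) ^ 2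
          / (∑ x, c x ^ 2)) ≤ 3 :=
      expmoment_le (un t) (fun x j => (hupos x j).le) husum c i rfl hSpos
    set S : ℝ := ∑ x, c x ^ 2 with hSdef
    set Z : Conf d n k → ℝ :=
      fun σ => ∑ x, ((if σ x = i then (1:ℝ) else 0) - un t x i) * c x with hZdef
    have hent := entropy_ineq ν μt hν0 hν1 hμtpos hμtsum (fun σ => Z σ ^ 2 / S)
    have hsum3 : ∑ σ, μt σ * Real.exp (Z σ ^ 2 / S) ≤ 3 := hmoment
    have hsumpos : 0 < ∑ σ, μt σ * Real.exp (Z σ ^ 2 / S) :=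
      Finset.sum_pos (fun σ _ => mul_pos (hμtpos σ) (Real.exp_pos _)) Finset.univ_nonempty
    have hlog3 : Real.log (∑ σ, μt σ * Real.exp (Z σ ^ 2 / S)) ≤ Real.log 3 :=
      Real.log_le_log hsumpos hsum3
    have hmain : ∑ σ, ν σ * (Z σ ^ 2 / S)
        ≤ (∑ σ, ν σ * Real.log (ν σ / μt σ)) + Real.log 3 := by
      calc ∑ σ, ν σ * (Z σ ^ 2 / S)
          ≤ (∑ σ, ν σ * Real.log (ν σ / μt σ))
            + Real.log (∑ σ, μt σ * Real.exp (Z σ ^ 2 / S)) := hent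
        _ ≤ (∑ σ, ν σ * Real.log (ν σ / μt σ)) + Real.log 3 := by linarith
    calc ∑ σ, ν σ * Z σ ^ 2 = S * ∑ σ, ν σ * (Z σ ^ 2 / S) := by
          rw [Finset.mul_sum]
          apply Finset.sum_congr rfl
          intro σ _
          field_simp
      _ ≤ S * ((∑ σ, ν σ * Real.log (ν σ / μt σ)) + Real.log 3) :=
          mul_le_mul_of_nonneg_left hmain hSpos.le
end MatrixExp
end
end

section
/- Deterministic bound on the carré du champ of the fluctuation field. For every n ≥ 1, every i ∈ Q_k, every t ≥ 0, every f : 𝕋ᵈ → ℝ and every configuration σ ∈ Ω_{n,k}, one has Γ_n( X_t^{n,i}(f), X_t^{n,i}(f) )(σ) ≤ ( a + ‖J‖_∞ )·n^{−d} Σ_{x∈𝕋ₙᵈ} f(x/n)², where ‖J‖_∞ is the supremum of J. -/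
open MeasureTheory Real

noncomputable section

/-- The generator `L_n` acting on functions. -/
def Lfun (d n k : ℕ) (a : ℝ) (J : (Fin d → ℝ) → (Fin d → ℝ) → ℝ) (F : Conf d n k → ℝ)
    (σ : Conf d n k) : ℝ :=
  ∑ x : Site d n, rate d n k a J x σ * (F (flipUp x σ) - F σ)

/-- The carré du champ operator `Γ_n(F,G) = L_n(FG) − F L_n G − G L_n F`. -/
def carre (d n k : ℕ) (a : ℝ) (J : (Fin d → ℝ) → (Fin d → ℝ) → ℝ) (F G : Conf d n k → ℝ)
    (σ : Conf d n k) : ℝ :=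
  Lfun d n k a J (fun τ => F τ * G τ) σ - F σ * Lfun d n k a J G σ - G σ * Lfun d n k a J F σ

/-- The fluctuation field `X_t^{n,i}(f)` (as a function of the configuration), centered
around a discrete profile `u : 𝕋ₙᵈ → ℝ^{Q_k}`. -/
def fluct (d n k : ℕ) (u : Site d n → Fin (k + 1) → ℝ) (f : (Fin d → ℝ) → ℝ)
    (i : Fin (k + 1)) (σ : Conf d n k) : ℝ :=
  (1 / Real.sqrt ((n : ℝ) ^ d)) * ∑ x : Site d n,
    ((if σ x = i then (1 : ℝ) else 0) - u x i) * f (emb d n x)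

/-- **Deterministic bound on the carré du champ of the fluctuation field.** -/
theorem carre_du_champ_bound
    (d k : ℕ) (hd : 1 ≤ d) (hk : 1 ≤ k) (a : ℝ) (ha : 0 < a)
    (J : (Fin d → ℝ) → (Fin d → ℝ) → ℝ)
    (hJnonneg : ∀ x y, 0 ≤ J x y)
    (hJbdd : ∃ CJ : ℝ, ∀ x y, J x y ≤ CJ) :
    ∀ n : ℕ, 1 ≤ n →
      ∀ un : ℝ → Site d n → Fin (k + 1) → ℝ,
      ∀ i : Fin (k + 1), ∀ t : ℝ, 0 ≤ t →
      ∀ f : (Fin d → ℝ) → ℝ, ∀ σ : Conf d n k,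
        carre d n k a J (fluct d n k (un t) f i) (fluct d n k (un t) f i) σ
          ≤ (a + ⨆ p : (Fin d → ℝ) × (Fin d → ℝ), J p.1 p.2) *
              ((1 / (n : ℝ) ^ d) * ∑ x : Site d n, f (emb d n x) ^ 2) := by
  intro n hn un i t ht f σ
  obtain ⟨CJ, hCJ⟩ := hJbdd
  have hBdd : BddAbove (Set.range fun p : (Fin d → ℝ) × (Fin d → ℝ) => J p.1 p.2) :=
    ⟨CJ, by rintro y ⟨p, rfl⟩; exact hCJ p.1 p.2⟩
  set S := ⨆ p : (Fin d → ℝ) × (Fin d → ℝ), J p.1 p.2 with hSdef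
  have hJS : ∀ x y, J x y ≤ S := fun x y => le_ciSup hBdd (x, y)
  have hS0 : 0 ≤ S := (hJnonneg 0 0).trans (hJS 0 0)
  have hn0 : (0 : ℝ) < (n : ℝ) := by exact_mod_cast hn
  have hnd : (0 : ℝ) < (n : ℝ) ^ d := pow_pos hn0 d
  set F := fluct d n k (un t) f i with hF
  have hcarre : carre d n k a J F F σ
      = ∑ x : Site d n, rate d n k a J x σ * (F (flipUp x σ) - F σ) ^ 2 := by
    simp only [carre, Lfun, Finset.mul_sum, ← Finset.sum_sub_distrib]
    exact Finset.sum_congr rfl fun x _ => by ring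
  rw [hcarre]
  have hrateS : ∀ x : Site d n, rate d n k a J x σ ≤ a + S := by
    intro x
    have h1 : a * (if σ x = Fin.last k then (1:ℝ) else 0) ≤ a := by
      split_ifs <;> simp [ha.le]
    have h2 : (1 / (n : ℝ) ^ d) * ∑ y ∈ Finset.univ.erase x,
        J (emb d n x) (emb d n y) * (if σ y = Fin.last k ∧ σ x ≠ Fin.last k then (1:ℝ) else 0)
        ≤ S := by
      have hsum : ∑ y ∈ Finset.univ.erase x,
          J (emb d n x) (emb d n y) * (if σ y = Fin.last k ∧ σ x ≠ Fin.last k then (1:ℝ) else 0)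
          ≤ ∑ _y ∈ Finset.univ.erase x, S := by
        refine Finset.sum_le_sum fun y _ => ?_
        split_ifs with h
        · simpa using hJS (emb d n x) (emb d n y)
        · simpa using hS0
      have hcard : ((Finset.univ.erase x).card : ℝ) ≤ (n : ℝ) ^ d := by
        have h1 : (Finset.univ.erase x).card ≤ Fintype.card (Site d n) :=
          (Finset.card_le_card (Finset.erase_subset _ _)).trans (by simp)
        have h2 : Fintype.card (Site d n) = n ^ d := by simp
        calc ((Finset.univ.erase x).card : ℝ) ≤ (Fintype.card (Site d n) : ℝ) := by
              exact_mod_cast h1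
          _ = (n : ℝ) ^ d := by rw [h2]; push_cast; ring
      rw [Finset.sum_const, nsmul_eq_mul] at hsum
      calc (1 / (n : ℝ) ^ d) * ∑ y ∈ Finset.univ.erase x,
          J (emb d n x) (emb d n y) * (if σ y = Fin.last k ∧ σ x ≠ Fin.last k then (1:ℝ) else 0)
          ≤ (1 / (n : ℝ) ^ d) * (((Finset.univ.erase x).card : ℝ) * S) := by
            apply mul_le_mul_of_nonneg_left hsum (by positivity)
        _ ≤ (1 / (n : ℝ) ^ d) * ((n : ℝ) ^ d * S) := by
            apply mul_le_mul_of_nonneg_left (mul_le_mul_of_nonneg_right hcard hS0) (by positivity)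
        _ = S := by field_simp
    unfold rate; linarith
  have hrate0 : ∀ x : Site d n, 0 ≤ rate d n k a J x σ := by
    intro x
    unfold rate
    have h1 : 0 ≤ a * (if σ x = Fin.last k then (1:ℝ) else 0) := by positivity
    have h2 : 0 ≤ ∑ y ∈ Finset.univ.erase x,
        J (emb d n x) (emb d n y) * (if σ y = Fin.last k ∧ σ x ≠ Fin.last k then (1:ℝ) else 0) := by
      refine Finset.sum_nonneg fun y _ => mul_nonneg (hJnonneg _ _) (by positivity)
    positivity
  have hdiff : ∀ x : Site d n,
      (F (flipUp x σ) - F σ) ^ 2 ≤ (1 / (n : ℝ) ^ d) * f (emb d n x) ^ 2 := by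
    intro x
    have hstep : F (flipUp x σ) - F σ
        = (1 / Real.sqrt ((n : ℝ) ^ d)) *
          (((if flipUp x σ x = i then (1:ℝ) else 0) - (if σ x = i then (1:ℝ) else 0)) *
            f (emb d n x)) := by
      rw [hF]
      unfold fluct
      rw [← mul_sub, ← Finset.sum_sub_distrib]
      congr 1
      rw [Finset.sum_eq_single x]
      · ring
      · intro y _ hyx
        have : flipUp x σ y = σ y := Function.update_of_ne hyx _ _
        rw [this]; ring
      · intro h; exact absurd (Finset.mem_univ x) h
    rw [hstep, mul_pow, mul_pow]
    have hc : (1 / Real.sqrt ((n : ℝ) ^ d)) ^ 2 = 1 / (n : ℝ) ^ d := by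
      rw [div_pow, one_pow, Real.sq_sqrt hnd.le]
    rw [hc]
    have hδ : ((if flipUp x σ x = i then (1:ℝ) else 0) - (if σ x = i then (1:ℝ) else 0)) ^ 2 ≤ 1 := by
      split_ifs <;> norm_num
    have := mul_le_mul_of_nonneg_right hδ (sq_nonneg (f (emb d n x)))
    calc (1 / (n : ℝ) ^ d) *
        (((if flipUp x σ x = i then (1:ℝ) else 0) - (if σ x = i then (1:ℝ) else 0)) ^ 2 *
          f (emb d n x) ^ 2)
        ≤ (1 / (n : ℝ) ^ d) * (1 * f (emb d n x) ^ 2) := by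
          apply mul_le_mul_of_nonneg_left this (by positivity)
      _ = (1 / (n : ℝ) ^ d) * f (emb d n x) ^ 2 := by ring
  calc ∑ x : Site d n, rate d n k a J x σ * (F (flipUp x σ) - F σ) ^ 2
      ≤ ∑ x : Site d n, (a + S) * ((1 / (n : ℝ) ^ d) * f (emb d n x) ^ 2) := by
        refine Finset.sum_le_sum fun x _ => ?_
        exact mul_le_mul (hrateS x) (hdiff x) (sq_nonneg _) (by linarith)
    _ = (a + S) * ((1 / (n : ℝ) ^ d) * ∑ x : Site d n, f (emb d n x) ^ 2) := by
        rw [← Finset.mul_sum, ← Finset.mul_sum]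
end
end

section
/- Trapezoidal rule for periodic functions. Let f : ℝ → ℝ be of class C² and periodic with period 1. Then for every integer n ≥ 1, | (1/n) Σ_{x=1}^n f(x/n) − ∫₀¹ f(x) dx | ≤ ‖f''‖_∞ / (12 n²), where ‖f''‖_∞ denotes the supremum norm of the second derivative of f. -/
open Real

theorem trap_err (f : ℝ → ℝ) (hd1 : Differentiable ℝ f)
    (hd2 : Differentiable ℝ (deriv f)) (hc2 : Continuous (deriv (deriv f)))
    (M : ℝ) (hM : ∀ x, |deriv (deriv f) x| ≤ M) (a b : ℝ) (hab : a ≤ b) :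
    |(b - a) / 2 * (f a + f b) - ∫ x in a..b, f x| ≤ M * (b - a) ^ 3 / 12 := by
  have hcf : Continuous f := hd1.continuous
  have hcf' : Continuous (deriv f) := hd2.continuous
  have hcu : Continuous fun x : ℝ => (x - a) * (b - x) / 2 := by continuity
  have hcu' : Continuous fun x : ℝ => (a + b) / 2 - x := by continuity
  have h1 : ∫ x in a..b, ((a + b) / 2 - x) * deriv f x
      = ((a + b) / 2 - b) * f b - ((a + b) / 2 - a) * f a - ∫ x in a..b, (-1) * f x := by
    apply intervalIntegral.integral_mul_deriv_eq_deriv_mul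
    · intro x _; exact (hasDerivAt_id x).const_sub ((a + b) / 2)
    · intro x _; exact (hd1 x).hasDerivAt
    · exact continuous_const.intervalIntegrable _ _
    · exact hcf'.intervalIntegrable _ _
  have h2 : ∫ x in a..b, ((x - a) * (b - x) / 2) * deriv (deriv f) x
      = ((b - a) * (b - b) / 2) * deriv f b - ((a - a) * (b - a) / 2) * deriv f a
        - ∫ x in a..b, ((a + b) / 2 - x) * deriv f x := by
    apply intervalIntegral.integral_mul_deriv_eq_deriv_mul
    · intro x _
      have h := (((hasDerivAt_id x).sub_const a).mul ((hasDerivAt_id x).const_sub b)).div_const 2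
      simp only [id_eq] at h
      refine h.congr_deriv ?_
      ring
    · intro x _; exact (hd2 x).hasDerivAt
    · exact hcu'.intervalIntegrable _ _
    · exact hc2.intervalIntegrable _ _
  have key : (b - a) / 2 * (f a + f b) - ∫ x in a..b, f x
      = ∫ x in a..b, ((x - a) * (b - x) / 2) * deriv (deriv f) x := by
    rw [h2, h1]
    have hneg : ∫ x in a..b, (-1 : ℝ) * f x = -∫ x in a..b, f x := by
      simp [intervalIntegral.integral_neg]
    rw [hneg]; ring
  rw [key]
  have hnn : ∀ x ∈ Set.Icc a b, (0:ℝ) ≤ (x - a) * (b - x) / 2 := by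
    intro x hx
    have := hx.1; have := hx.2
    nlinarith [hx.1, hx.2]
  have hpoly : ∫ x in a..b, ((x - a) * (b - x) / 2 * M) = M * (b - a) ^ 3 / 12 := by
    have hF : ∀ x : ℝ, HasDerivAt (fun y => M * (-(y ^ 3 / 3) + (a + b) * y ^ 2 / 2 - a * b * y) / 2)
        ((x - a) * (b - x) / 2 * M) x := by
      intro x
      have h := (((((hasDerivAt_pow 3 x).div_const 3).neg.add
        (((hasDerivAt_pow 2 x).const_mul (a + b)).div_const 2)).sub
        ((hasDerivAt_id x).const_mul (a * b))).const_mul M).div_const 2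
      simp only [id_eq] at h
      refine h.congr_deriv ?_
      push_cast
      ring
    rw [intervalIntegral.integral_eq_sub_of_hasDerivAt (fun x _ => hF x)
      ((hcu.mul continuous_const).intervalIntegrable _ _)]
    ring
  calc |∫ x in a..b, ((x - a) * (b - x) / 2) * deriv (deriv f) x|
      ≤ ∫ x in a..b, |((x - a) * (b - x) / 2) * deriv (deriv f) x| :=
        intervalIntegral.abs_integral_le_integral_abs hab
    _ ≤ ∫ x in a..b, ((x - a) * (b - x) / 2 * M) := by
        apply intervalIntegral.integral_mono_on hab
        · exact (hcu.mul hc2).abs.intervalIntegrable _ _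
        · exact (hcu.mul continuous_const).intervalIntegrable _ _
        · intro x hx
          rw [abs_mul, abs_of_nonneg (hnn x hx)]
          exact mul_le_mul_of_nonneg_left (hM x) (hnn x hx)
    _ = M * (b - a) ^ 3 / 12 := hpoly

/-- **Trapezoidal rule for periodic functions.** For a `C²` function `f : ℝ → ℝ` of period `1`,
`| (1/n) ∑_{x=1}^n f(x/n) − ∫₀¹ f | ≤ ‖f''‖_∞ / (12 n²)`. -/
theorem trapezoidal_rule_periodic
    (f : ℝ → ℝ) (hf : ContDiff ℝ 2 f) (hper : ∀ x : ℝ, f (x + 1) = f x)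
    (n : ℕ) (hn : 1 ≤ n) :
    |(1 / (n : ℝ)) * ∑ x ∈ Finset.Icc 1 n, f ((x : ℝ) / n) - ∫ x in (0 : ℝ)..1, f x|
      ≤ (⨆ x, |iteratedDeriv 2 f x|) / (12 * (n : ℝ) ^ 2) := by
  have hf2 : iteratedDeriv 2 f = deriv (deriv f) := by
    rw [iteratedDeriv_succ, iteratedDeriv_one]
  -- basic differentiability facts
  have h1 := (contDiff_succ_iff_deriv.mp (show ContDiff ℝ (1 + 1) f by exact_mod_cast hf))
  have hd1 : Differentiable ℝ f := h1.1
  have hc1 : ContDiff ℝ 1 (deriv f) := h1.2.2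
  have h2' := (contDiff_succ_iff_deriv.mp (show ContDiff ℝ (0 + 1) (deriv f) by exact_mod_cast hc1))
  have hd2 : Differentiable ℝ (deriv f) := h2'.1
  have hc2 : Continuous (deriv (deriv f)) := by
    have := h2'.2.2
    rwa [contDiff_zero] at this
  have hcf : Continuous f := hd1.continuous
  -- periodicity of second derivative
  have hperf : (fun x : ℝ => f (x + 1)) = f := funext hper
  have hper1 : ∀ x : ℝ, deriv f (x + 1) = deriv f x := by
    intro x
    conv_rhs => rw [← hperf]
    rw [deriv_comp_add_const]
  have hper2 : ∀ x : ℝ, deriv (deriv f) (x + 1) = deriv (deriv f) x := by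
    intro x
    conv_rhs => rw [show deriv f = fun x => deriv f (x + 1) from funext fun y => (hper1 y).symm]
    rw [deriv_comp_add_const]
  -- sup norm bound
  set M : ℝ := ⨆ x, |iteratedDeriv 2 f x| with hMdef
  have hgc : Continuous fun x => |iteratedDeriv 2 f x| := by
    rw [hf2]; exact hc2.abs
  have hgp : Function.Periodic (fun x => |iteratedDeriv 2 f x|) 1 := fun x => by
    simp only [hf2, hper2 x]
  obtain ⟨x0, _, hx0⟩ := isCompact_Icc.exists_isMaxOn (Set.nonempty_Icc.mpr zero_le_one)
    (hgc.continuousOn (s := Set.Icc (0:ℝ) 1))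
  have hbdd : BddAbove (Set.range fun x => |iteratedDeriv 2 f x|) := by
    refine ⟨|iteratedDeriv 2 f x0|, ?_⟩
    rintro _ ⟨x, rfl⟩
    obtain ⟨y, hy, hxy⟩ := hgp.exists_mem_Ico₀ one_pos x
    show |iteratedDeriv 2 f x| ≤ _
    rw [hxy]
    exact hx0 ⟨hy.1, hy.2.le⟩
  have hM : ∀ x, |deriv (deriv f) x| ≤ M := by
    intro x
    rw [← hf2]
    exact le_ciSup hbdd x
  have hM0 : 0 ≤ M := (abs_nonneg _).trans (hM 0)
  -- setup the partition
  have hn0 : (0:ℝ) < n := by positivity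
  set a : ℕ → ℝ := fun k => k / n with ha
  have hstep : ∀ k : ℕ, a (k + 1) - a k = 1 / n := by
    intro k
    simp only [ha]
    push_cast
    field_simp
    ring
  have hmono : ∀ k : ℕ, a k ≤ a (k + 1) := by
    intro k
    rw [← sub_nonneg, hstep k]
    positivity
  -- integral splits
  have hI : ∫ x in (0:ℝ)..1, f x = ∑ k ∈ Finset.range n, ∫ x in a k..a (k+1), f x := by
    rw [intervalIntegral.sum_integral_adjacent_intervals
      (fun k _ => hcf.intervalIntegrable _ _)]
    have h0 : a 0 = 0 := by simp [ha]
    have h1 : a n = 1 := by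
      simp only [ha]
      field_simp
    rw [h0, h1]
  -- trapezoid sum rewrites
  have hT : (1 / (n : ℝ)) * ∑ x ∈ Finset.Icc 1 n, f ((x : ℝ) / n)
      = ∑ k ∈ Finset.range n, ((a (k+1) - a k) / 2 * (f (a k) + f (a (k+1)))) := by
    have hS2 : ∑ k ∈ Finset.range n, f (a (k+1)) = ∑ x ∈ Finset.Icc 1 n, f ((x : ℝ) / n) := by
      rw [show Finset.Icc 1 n = Finset.Ico 1 (n + 1) from (Finset.Ico_add_one_right_eq_Icc 1 n).symm,
        Finset.sum_Ico_eq_sum_range]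
      simp only [Nat.add_sub_cancel]
      refine Finset.sum_congr rfl fun i _ => ?_
      simp only [ha]
      push_cast
      ring_nf
    have hS1 : ∑ k ∈ Finset.range n, f (a k) = ∑ k ∈ Finset.range n, f (a (k+1)) := by
      obtain ⟨m, rfl⟩ : ∃ m, n = m + 1 := ⟨n - 1, (Nat.succ_pred_eq_of_pos hn).symm⟩
      rw [Finset.sum_range_succ' (fun k => f (a k)) m, Finset.sum_range_succ]
      congr 1
      have h0 : a 0 = 0 := by simp [ha]
      have h1 : a (m+1) = 1 := by simp only [ha]; field_simp
      rw [h0, h1, show (1:ℝ) = 0 + 1 by ring, hper 0]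
    calc (1 / (n : ℝ)) * ∑ x ∈ Finset.Icc 1 n, f ((x : ℝ) / n)
        = 1/(2*n) * ∑ k ∈ Finset.range n, f (a k)
          + 1/(2*n) * ∑ k ∈ Finset.range n, f (a (k+1)) := by
          rw [hS1, hS2]; ring
      _ = ∑ k ∈ Finset.range n, ((a (k+1) - a k) / 2 * (f (a k) + f (a (k+1)))) := by
          rw [Finset.mul_sum, Finset.mul_sum, ← Finset.sum_add_distrib]
          refine Finset.sum_congr rfl fun k _ => ?_
          rw [hstep k]
          ring
  rw [hT, hI, ← Finset.sum_sub_distrib]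
  calc |∑ k ∈ Finset.range n, ((a (k+1) - a k) / 2 * (f (a k) + f (a (k+1)))
          - ∫ x in a k..a (k+1), f x)|
      ≤ ∑ k ∈ Finset.range n, |(a (k+1) - a k) / 2 * (f (a k) + f (a (k+1)))
          - ∫ x in a k..a (k+1), f x| := Finset.abs_sum_le_sum_abs _ _
    _ ≤ ∑ k ∈ Finset.range n, M * (1/n) ^ 3 / 12 := by
        refine Finset.sum_le_sum fun k _ => ?_
        have := trap_err f hd1 hd2 hc2 M hM (a k) (a (k+1)) (hmono k)
        rw [hstep k] at this
        rw [hstep k]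
        exact this
    _ = M / (12 * (n : ℝ) ^ 2) := by
        rw [Finset.sum_const, Finset.card_range, nsmul_eq_mul]
        field_simp
end

section
/- Hanson–Wright inequality (Proposition B.7). Let I be a finite index set and let ((X_i, Y_i))_{i∈I} be independent random vectors in ℝ², where each X_i is sub-Gaussian of index σ_i² and each Y_i is sub-Gaussian of index σ̃_i². Let g : I × I → ℝ and let γ > 0 satisfy γ ≤ ( 1024 Σ_{i≠j} σ_i² σ̃_j² g_{ij}² )^{−1/2}. Then E[ exp( γ Σ_{i≠j} g_{ij} X_i Y_j ) ] ≤ 3. -/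
open MeasureTheory Real

noncomputable section

/-- A real random variable `X` is sub-Gaussian of index `σ²` if
`E[e^{θX}] ≤ e^{σ²θ²/2}` for every `θ ∈ ℝ` (in particular each `e^{θX}` is integrable). -/
def SubGaussianIdx {Ω : Type*} [MeasurableSpace Ω] (μ : Measure Ω) (X : Ω → ℝ)
    (σ2 : ℝ) : Prop :=
  ∀ θ : ℝ, Integrable (fun ω => Real.exp (θ * X ω)) μ ∧
    ∫ ω, Real.exp (θ * X ω) ∂μ ≤ Real.exp (σ2 * θ ^ 2 / 2)

/-- `X` is sub-Gaussian if it is sub-Gaussian of some index. -/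
def SubGaussian {Ω : Type*} [MeasurableSpace Ω] (μ : Measure Ω) (X : Ω → ℝ) : Prop :=
  ∃ σ2 : ℝ, SubGaussianIdx μ X σ2

/-- The squared sub-Gaussian norm `‖X‖²_{ψ₂}`, the smallest index `σ²` for which the
sub-Gaussian bound holds. -/
def subGaussianNormSq {Ω : Type*} [MeasurableSpace Ω] (μ : Measure Ω) (X : Ω → ℝ) : ℝ :=
  sInf {σ2 : ℝ | SubGaussianIdx μ X σ2}

namespace HW

open ProbabilityTheory ENNReal

variable {Ω : Type*} [MeasurableSpace Ω] {μ : Measure Ω}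

lemma rpow_finset_sum {ι : Type*} (x : ℝ≥0∞) (hx : x ≠ 0) (hx' : x ≠ ⊤)
    (s : Finset ι) (q : ι → ℝ) : x ^ (∑ i ∈ s, q i) = ∏ i ∈ s, x ^ (q i) := by
  classical
  induction s using Finset.induction_on with
  | empty => simp
  | @insert a s ha ih =>
    rw [Finset.sum_insert ha, Finset.prod_insert ha, ENNReal.rpow_add _ _ hx hx', ih]

lemma sg_nonneg [IsProbabilityMeasure μ] {X : Ω → ℝ} {σ2 : ℝ}
    (h : SubGaussianIdx μ X σ2) : 0 ≤ σ2 := by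
  obtain ⟨h1i, h1⟩ := h 1
  obtain ⟨h2i, h2⟩ := h (-1)
  have hpt : ∀ ω, (2 : ℝ) ≤ exp (1 * X ω) + exp (-1 * X ω) := by
    intro ω
    have e3 : exp (1 * X ω) * exp (-1 * X ω) = 1 := by
      rw [← exp_add]; norm_num
    nlinarith [sq_nonneg (exp (1 * X ω) - 1), exp_pos (1 * X ω), exp_pos (-1 * X ω)]
  have key : (2 : ℝ) ≤ ∫ ω, (exp (1 * X ω) + exp (-1 * X ω)) ∂μ := by
    calc (2 : ℝ) = ∫ _ω : Ω, (2 : ℝ) ∂μ := by simp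
    _ ≤ _ := integral_mono (integrable_const 2) (h1i.add h2i) hpt
  rw [integral_add h1i h2i] at key
  have h6 : σ2 * (-1 : ℝ) ^ 2 / 2 = σ2 * 1 ^ 2 / 2 := by norm_num
  rw [h6] at h2
  have h5 : (1 : ℝ) ≤ exp (σ2 * 1 ^ 2 / 2) := by linarith
  rw [Real.one_le_exp_iff] at h5
  nlinarith

lemma sg_lintegral {X : Ω → ℝ} {σ2 : ℝ} (h : SubGaussianIdx μ X σ2) (θ : ℝ) :
    ∫⁻ ω, ENNReal.ofReal (exp (θ * X ω)) ∂μ ≤ ENNReal.ofReal (exp (σ2 * θ ^ 2 / 2)) := by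
  rw [← ofReal_integral_eq_lintegral_ofReal (h θ).1
    (Filter.Eventually.of_forall fun ω => (exp_pos _).le)]
  exact ENNReal.ofReal_le_ofReal (h θ).2

variable {I : Type*} [DecidableEq I]

lemma lintegral_indep_prod [IsProbabilityMeasure μ] {V : I → Ω → ℝ × ℝ}
    (hmeas : ∀ i, Measurable (V i))
    (hindep : iIndepFun V μ)
    (φ : I → ℝ × ℝ → ℝ≥0∞) (hφ : ∀ i, Measurable (φ i)) (s : Finset I) :
    ∫⁻ ω, ∏ i ∈ s, φ i (V i ω) ∂μ = ∏ i ∈ s, ∫⁻ ω, φ i (V i ω) ∂μ := by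
  induction s using Finset.induction_on with
  | empty => simp
  | @insert a s ha ih =>
    have h1 := hindep.indepFun_finset {a} s (Finset.disjoint_singleton_left.mpr ha) hmeas
    have hF : Measurable (fun v : ({a} : Finset I) → ℝ × ℝ =>
        φ a (v ⟨a, Finset.mem_singleton_self a⟩)) :=
      (hφ a).comp (measurable_pi_apply _)
    have hG : Measurable (fun v : {x // x ∈ s} → ℝ × ℝ => ∏ i ∈ s.attach, φ i.1 (v i)) :=
      Finset.measurable_prod _ fun i _ => (hφ i.1).comp (measurable_pi_apply _)
    have h2 := h1.comp hF hG
    have h2' : IndepFun (fun ω => φ a (V a ω)) (fun ω => ∏ i ∈ s, φ i (V i ω)) μ := by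
      have heq : (fun ω => ∏ i ∈ s.attach, φ i.1 (V i.1 ω))
          = fun ω => ∏ i ∈ s, φ i (V i ω) := by
        funext ω; exact Finset.prod_attach s fun i => φ i (V i ω)
      rw [← heq]
      exact h2
    have hfm : Measurable (fun ω => φ a (V a ω)) := (hφ a).comp (hmeas a)
    have hgm : Measurable (fun ω => ∏ i ∈ s, φ i (V i ω)) :=
      Finset.measurable_prod _ fun i _ => (hφ i).comp (hmeas i)
    have key := lintegral_mul_eq_lintegral_mul_lintegral_of_indepFun hfm hgm h2'
    simp only [Pi.mul_apply] at key
    simp only [Finset.prod_insert ha]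
    rw [key, ih]

lemma gauss_lint {f : ℝ → ℝ} (hf : Measurable f) (hnn : ∀ x, 0 ≤ f x)
    (hint : Integrable (fun x => gaussianPDFReal 0 1 x * f x)) :
    ∫⁻ w, ENNReal.ofReal (f w) ∂(gaussianReal 0 1)
      = ENNReal.ofReal (∫ x, gaussianPDFReal 0 1 x * f x) := by
  rw [gaussianReal_of_var_ne_zero 0 one_ne_zero]
  rw [lintegral_withDensity_eq_lintegral_mul _ (measurable_gaussianPDF 0 1)
    hf.ennreal_ofReal]
  have hcong : ∫⁻ a, (gaussianPDF 0 1 * fun x => ENNReal.ofReal (f x)) a ∂volume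
      = ∫⁻ x, ENNReal.ofReal (gaussianPDFReal 0 1 x * f x) ∂volume := by
    refine lintegral_congr fun x => ?_
    simp only [Pi.mul_apply, gaussianPDF]
    rw [← ENNReal.ofReal_mul (gaussianPDFReal_nonneg 0 1 x)]
  rw [hcong, ← ofReal_integral_eq_lintegral_ofReal hint
    (Filter.Eventually.of_forall fun x =>
      mul_nonneg (gaussianPDFReal_nonneg 0 1 x) (hnn x))]

lemma gauss_mgf (a : ℝ) :
    ∫⁻ w, ENNReal.ofReal (exp (a * w)) ∂(gaussianReal 0 1)
      = ENNReal.ofReal (exp (a ^ 2 / 2)) := by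
  have h1 : ∀ x : ℝ, gaussianPDFReal 0 1 x * exp (a * x)
      = (Real.sqrt (2 * π))⁻¹ * exp (a ^ 2 / 2) * exp (-(1 / 2) * (x - a) ^ 2) := by
    intro x
    simp only [gaussianPDFReal, NNReal.coe_one, mul_one, sub_zero]
    rw [mul_assoc, ← exp_add, mul_assoc, ← exp_add]
    congr 2
    ring
  have h2 : Integrable (fun x : ℝ =>
      (Real.sqrt (2 * π))⁻¹ * exp (a ^ 2 / 2) * exp (-(1 / 2) * (x - a) ^ 2)) volume := by
    have hb : Integrable (fun x : ℝ => exp (-(1 / 2) * x ^ 2)) volume :=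
      integrable_exp_neg_mul_sq (by norm_num)
    exact (hb.comp_sub_right a).const_mul _
  have hint : Integrable (fun x => gaussianPDFReal 0 1 x * exp (a * x)) volume := by
    simpa only [h1] using h2
  rw [gauss_lint (by fun_prop) (fun x => (exp_pos _).le) hint]
  congr 1
  have h3 : ∫ x, gaussianPDFReal 0 1 x * exp (a * x)
      = (Real.sqrt (2 * π))⁻¹ * exp (a ^ 2 / 2) * ∫ x : ℝ, exp (-(1 / 2) * (x - a) ^ 2) := by
    rw [← integral_const_mul]
    exact integral_congr_ae (Filter.Eventually.of_forall fun x => by simpa using h1 x)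
  rw [h3, integral_sub_right_eq_self (μ := volume) (fun x : ℝ => exp (-(1 / 2) * x ^ 2)) a,
    integral_gaussian, show π / (1 / 2 : ℝ) = 2 * π by ring]
  have hs : Real.sqrt (2 * π) ≠ 0 := by positivity
  field_simp

lemma gauss_sq {b : ℝ} (hb : 0 ≤ b) (hb' : b < 1 / 2) :
    ∫⁻ w, ENNReal.ofReal (exp (b * w ^ 2)) ∂(gaussianReal 0 1)
      = ENNReal.ofReal ((Real.sqrt (1 - 2 * b))⁻¹) := by
  have hpos : (0 : ℝ) < 1 / 2 - b := by linarith
  have h1 : ∀ x : ℝ, gaussianPDFReal 0 1 x * exp (b * x ^ 2)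
      = (Real.sqrt (2 * π))⁻¹ * exp (-(1 / 2 - b) * x ^ 2) := by
    intro x
    simp only [gaussianPDFReal, NNReal.coe_one, mul_one, sub_zero]
    rw [mul_assoc, ← exp_add]
    congr 2
    ring
  have hint : Integrable (fun x => gaussianPDFReal 0 1 x * exp (b * x ^ 2)) volume := by
    simpa only [h1] using (integrable_exp_neg_mul_sq hpos).const_mul (Real.sqrt (2 * π))⁻¹
  rw [gauss_lint (by fun_prop) (fun x => (exp_pos _).le) hint]
  congr 1
  have h3 : ∫ x, gaussianPDFReal 0 1 x * exp (b * x ^ 2)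
      = (Real.sqrt (2 * π))⁻¹ * ∫ x : ℝ, exp (-(1 / 2 - b) * x ^ 2) := by
    rw [← integral_const_mul]
    exact integral_congr_ae (Filter.Eventually.of_forall fun x => by simpa using h1 x)
  rw [h3, integral_gaussian]
  rw [show π / (1 / 2 - b) = (2 * π) / (1 - 2 * b) by field_simp]
  rw [Real.sqrt_div (by positivity) (1 - 2 * b)]
  have hs : Real.sqrt (2 * π) ≠ 0 := by positivity
  have hs2 : Real.sqrt (1 - 2 * b) ≠ 0 := by
    have : (0:ℝ) < 1 - 2 * b := by linarith
    positivity
  field_simp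

lemma sq_mgf [IsProbabilityMeasure μ] {T : Ω → ℝ} (hT : Measurable T) {τ m : ℝ}
    (hτ : 0 ≤ τ) (hm : 0 ≤ m) (hmτ : m * τ < 1 / 2)
    (hmgf : ∀ θ : ℝ, ∫⁻ ω, ENNReal.ofReal (exp (θ * T ω)) ∂μ
      ≤ ENNReal.ofReal (exp (τ * θ ^ 2 / 2))) :
    ∫⁻ ω, ENNReal.ofReal (exp (m * T ω ^ 2)) ∂μ
      ≤ ENNReal.ofReal ((Real.sqrt (1 - 2 * (m * τ)))⁻¹) := by
  have h2m : (0 : ℝ) ≤ 2 * m := by linarith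
  have hjm : Measurable (fun p : Ω × ℝ =>
      ENNReal.ofReal (exp (Real.sqrt (2 * m) * T p.1 * p.2))) := by
    apply Measurable.ennreal_ofReal
    exact ((hT.comp measurable_fst).const_mul _).mul measurable_snd |>.exp
  have hpt : ∀ t : ℝ, ENNReal.ofReal (exp (m * t ^ 2))
      = ∫⁻ w, ENNReal.ofReal (exp (Real.sqrt (2 * m) * t * w)) ∂(gaussianReal 0 1) := by
    intro t
    rw [gauss_mgf (Real.sqrt (2 * m) * t)]
    congr 1
    congr 1
    rw [mul_pow, Real.sq_sqrt h2m]
    ring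
  calc ∫⁻ ω, ENNReal.ofReal (exp (m * T ω ^ 2)) ∂μ
      = ∫⁻ ω, ∫⁻ w, ENNReal.ofReal (exp (Real.sqrt (2 * m) * T ω * w))
          ∂(gaussianReal 0 1) ∂μ := lintegral_congr fun ω => hpt (T ω)
    _ = ∫⁻ w, ∫⁻ ω, ENNReal.ofReal (exp (Real.sqrt (2 * m) * T ω * w)) ∂μ
          ∂(gaussianReal 0 1) := lintegral_lintegral_swap hjm.aemeasurable
    _ ≤ ∫⁻ w, ENNReal.ofReal (exp (τ * (Real.sqrt (2 * m) * w) ^ 2 / 2))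
          ∂(gaussianReal 0 1) := by
        refine lintegral_mono fun w => ?_
        calc ∫⁻ ω, ENNReal.ofReal (exp (Real.sqrt (2 * m) * T ω * w)) ∂μ
            = ∫⁻ ω, ENNReal.ofReal (exp (Real.sqrt (2 * m) * w * T ω)) ∂μ := by
              refine lintegral_congr fun ω => ?_
              congr 1
              congr 1
              ring
          _ ≤ _ := hmgf (Real.sqrt (2 * m) * w)
    _ = ∫⁻ w, ENNReal.ofReal (exp (m * τ * w ^ 2)) ∂(gaussianReal 0 1) := by
        refine lintegral_congr fun w => ?_
        congr 1
        congr 1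
        rw [mul_pow, Real.sq_sqrt h2m]
        ring
    _ = ENNReal.ofReal ((Real.sqrt (1 - 2 * (m * τ)))⁻¹) := gauss_sq (by positivity) hmτ

lemma decouple_step [IsProbabilityMeasure μ] {V : I → Ω → ℝ × ℝ}
    (hmeas : ∀ i, Measurable (V i))
    (hindep : iIndepFun V μ)
    (A B : Finset I) (hAB : Disjoint A B)
    (t : I → ({i // i ∈ A} → ℝ) → ℝ) (ht : ∀ j, Measurable (t j))
    (sth : I → ℝ)
    (hY' : ∀ j ∈ B, ∀ θ : ℝ, ∫⁻ ω, ENNReal.ofReal (exp (θ * (V j ω).2)) ∂μ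
      ≤ ENNReal.ofReal (exp (sth j * θ ^ 2 / 2))) :
    ∫⁻ ω, ENNReal.ofReal (exp (∑ j ∈ B, t j (fun i => (V i.1 ω).1) * (V j ω).2)) ∂μ
      ≤ ∫⁻ ω, ENNReal.ofReal
          (exp (∑ j ∈ B, sth j * t j (fun i => (V i.1 ω).1) ^ 2 / 2)) ∂μ := by
  classical
  set U : Ω → ({i // i ∈ A} → ℝ × ℝ) := fun ω i => V i.1 ω with hU_def
  set W : Ω → ({j // j ∈ B} → ℝ × ℝ) := fun ω j => V j.1 ω with hW_def
  have hU : Measurable U := measurable_pi_lambda _ fun i => hmeas i.1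
  have hW : Measurable W := measurable_pi_lambda _ fun j => hmeas j.1
  have hUW : IndepFun U W μ := hindep.indepFun_finset A B hAB hmeas
  set Φ : ({i // i ∈ A} → ℝ × ℝ) × ({j // j ∈ B} → ℝ × ℝ) → ℝ≥0∞ := fun p =>
    ENNReal.ofReal (exp (∑ j ∈ B.attach, t j.1 (fun i => (p.1 i).1) * (p.2 j).2)) with hPhi_def
  have hcoefm : ∀ j : { x // x ∈ B },
      Measurable (fun p : ({i // i ∈ A} → ℝ × ℝ) × ({j // j ∈ B} → ℝ × ℝ) =>
        t j.1 (fun i => (p.1 i).1)) := by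
    intro j
    exact (ht j.1).comp
      (measurable_pi_lambda _ fun i => ((measurable_pi_apply i).comp measurable_fst).fst)
  have hPhi : Measurable Φ := by
    apply Measurable.ennreal_ofReal
    apply Measurable.exp
    apply Finset.measurable_sum
    intro j _
    exact (hcoefm j).mul ((measurable_pi_apply j).comp measurable_snd).snd
  have hL : ∀ ω, ENNReal.ofReal
      (exp (∑ j ∈ B, t j (fun i => (V i.1 ω).1) * (V j ω).2)) = Φ (U ω, W ω) := by
    intro ω
    simp only [hPhi_def]
    congr 2
    exact (Finset.sum_attach B fun j => t j (fun i => (V i.1 ω).1) * (V j ω).2).symm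
  have hRm : Measurable (fun u : {i // i ∈ A} → ℝ × ℝ =>
      ENNReal.ofReal (exp (∑ j ∈ B, sth j * t j (fun i => (u i).1) ^ 2 / 2))) := by
    apply Measurable.ennreal_ofReal
    apply Measurable.exp
    apply Finset.measurable_sum
    intro j _
    apply Measurable.div_const
    apply Measurable.const_mul
    exact ((ht j).comp (measurable_pi_lambda _ fun i => (measurable_pi_apply i).fst)).pow_const 2
  calc ∫⁻ ω, ENNReal.ofReal
        (exp (∑ j ∈ B, t j (fun i => (V i.1 ω).1) * (V j ω).2)) ∂μ
      = ∫⁻ ω, Φ (U ω, W ω) ∂μ := lintegral_congr hL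
    _ = ∫⁻ p, Φ p ∂(μ.map fun ω => (U ω, W ω)) :=
        (lintegral_map hPhi (hU.prodMk hW)).symm
    _ = ∫⁻ p, Φ p ∂((μ.map U).prod (μ.map W)) := by
        rw [(indepFun_iff_map_prod_eq_prod_map_map hU.aemeasurable hW.aemeasurable).mp hUW]
    _ = ∫⁻ u, ∫⁻ w, Φ (u, w) ∂(μ.map W) ∂(μ.map U) := lintegral_prod _ hPhi.aemeasurable
    _ ≤ ∫⁻ u, ENNReal.ofReal
          (exp (∑ j ∈ B, sth j * t j (fun i => (u i).1) ^ 2 / 2)) ∂(μ.map U) := by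
        refine lintegral_mono fun u => ?_
        have hPhiu : Measurable fun w => Φ (u, w) := hPhi.comp measurable_prodMk_left
        have key : ∫⁻ w, Φ (u, w) ∂(μ.map W) = ∫⁻ ω, Φ (u, W ω) ∂μ :=
          lintegral_map hPhiu hW
        have hprod : ∀ ω, Φ (u, W ω)
            = ∏ j ∈ B, ENNReal.ofReal (exp (t j (fun i => (u i).1) * (V j ω).2)) := by
          intro ω
          simp only [hPhi_def]
          rw [exp_sum, ENNReal.ofReal_prod_of_nonneg (fun _ _ => (exp_pos _).le)]
          exact Finset.prod_attach B fun j =>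
            ENNReal.ofReal (exp (t j (fun i => (u i).1) * (V j ω).2))
        rw [key, lintegral_congr hprod,
          lintegral_indep_prod hmeas hindep
            (fun j v => ENNReal.ofReal (exp (t j (fun i => (u i).1) * v.2)))
            (fun j => (measurable_snd.const_mul _).exp.ennreal_ofReal) B]
        calc ∏ j ∈ B, ∫⁻ ω, ENNReal.ofReal (exp (t j (fun i => (u i).1) * (V j ω).2)) ∂μ
            ≤ ∏ j ∈ B, ENNReal.ofReal
                (exp (sth j * t j (fun i => (u i).1) ^ 2 / 2)) := by
              refine Finset.prod_le_prod' fun j hj => ?_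
              exact hY' j hj (t j (fun i => (u i).1))
          _ = ENNReal.ofReal (exp (∑ j ∈ B, sth j * t j (fun i => (u i).1) ^ 2 / 2)) := by
              rw [exp_sum, ENNReal.ofReal_prod_of_nonneg (fun _ _ => (exp_pos _).le)]
    _ = ∫⁻ ω, ENNReal.ofReal
          (exp (∑ j ∈ B, sth j * t j (fun i => (U ω i).1) ^ 2 / 2)) ∂μ :=
        lintegral_map hRm hU

lemma block_bound [IsProbabilityMeasure μ] [Fintype I] {V : I → Ω → ℝ × ℝ}
    (hmeas : ∀ i, Measurable (V i))
    (hindep : iIndepFun V μ)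
    (s st : I → ℝ)
    (hX : ∀ i, SubGaussianIdx μ (fun ω => (V i ω).1) (s i))
    (hY : ∀ i, SubGaussianIdx μ (fun ω => (V i ω).2) (st i))
    (hs : ∀ i, 0 ≤ s i) (hst : ∀ i, 0 ≤ st i)
    (g : I → I → ℝ) (c δ : ℝ) (hδ : 0 < δ)
    (A B : Finset I) (hAB : Disjoint A B)
    (hSig : c ^ 2 / 2 * (∑ j ∈ B, (st j + δ) * (δ + ∑ i ∈ A, s i * g i j ^ 2)) ≤ 1 / 4) :
    ∫⁻ ω, ENNReal.ofReal
        (exp (c * ∑ j ∈ B, (∑ i ∈ A, g i j * (V i ω).1) * (V j ω).2)) ∂μ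
      ≤ ENNReal.ofReal (Real.sqrt 2) := by
  classical
  have hsqrt2 : (1 : ℝ) ≤ Real.sqrt 2 := by
    nlinarith [Real.sq_sqrt (show (0:ℝ) ≤ 2 by norm_num), Real.sqrt_nonneg 2]
  set T : I → Ω → ℝ := fun j ω => ∑ i ∈ A, g i j * (V i ω).1 with hT_def
  have hTm : ∀ j, Measurable (T j) := fun j =>
    Finset.measurable_sum _ fun i _ => (hmeas i).fst.const_mul _
  set tau : I → ℝ := fun j => δ + ∑ i ∈ A, s i * g i j ^ 2 with htau_def
  have htau_pos : ∀ j, 0 < tau j := fun j => by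
    have h0 : 0 ≤ ∑ i ∈ A, s i * g i j ^ 2 :=
      Finset.sum_nonneg fun i _ => mul_nonneg (hs i) (sq_nonneg _)
    simp only [htau_def]
    linarith
  have hTmgf : ∀ j, ∀ θ : ℝ, ∫⁻ ω, ENNReal.ofReal (exp (θ * T j ω)) ∂μ
      ≤ ENNReal.ofReal (exp (tau j * θ ^ 2 / 2)) := by
    intro j θ
    have hsplit : ∀ ω, ENNReal.ofReal (exp (θ * T j ω))
        = ∏ i ∈ A, ENNReal.ofReal (exp ((θ * g i j) * (V i ω).1)) := by
      intro ω
      simp only [hT_def]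
      rw [Finset.mul_sum, exp_sum, ENNReal.ofReal_prod_of_nonneg (fun _ _ => (exp_pos _).le)]
      refine Finset.prod_congr rfl fun i _ => ?_
      congr 2
      ring
    rw [lintegral_congr hsplit,
      lintegral_indep_prod hmeas hindep (fun i v => ENNReal.ofReal (exp ((θ * g i j) * v.1)))
        (fun i => (measurable_fst.const_mul _).exp.ennreal_ofReal) A]
    calc ∏ i ∈ A, ∫⁻ ω, ENNReal.ofReal (exp ((θ * g i j) * (V i ω).1)) ∂μ
        ≤ ∏ i ∈ A, ENNReal.ofReal (exp (s i * (θ * g i j) ^ 2 / 2)) :=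
          Finset.prod_le_prod' fun i _ => sg_lintegral (hX i) (θ * g i j)
      _ = ENNReal.ofReal (exp (∑ i ∈ A, s i * (θ * g i j) ^ 2 / 2)) := by
          rw [exp_sum, ENNReal.ofReal_prod_of_nonneg (fun _ _ => (exp_pos _).le)]
      _ ≤ ENNReal.ofReal (exp (tau j * θ ^ 2 / 2)) := by
          apply ENNReal.ofReal_le_ofReal
          apply exp_le_exp.mpr
          have h1 : ∀ i, s i * (θ * g i j) ^ 2 / 2 = s i * g i j ^ 2 * (θ ^ 2 / 2) :=
            fun i => by ring
          rw [Finset.sum_congr rfl fun i _ => h1 i, ← Finset.sum_mul]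
          have h2 : tau j * θ ^ 2 / 2 = tau j * (θ ^ 2 / 2) := by ring
          rw [h2]
          apply mul_le_mul_of_nonneg_right _ (by positivity)
          simp only [htau_def]
          linarith
  rcases Finset.eq_empty_or_nonempty B with hB | hB
  · subst hB
    simp only [Finset.sum_empty, mul_zero, exp_zero, ENNReal.ofReal_one, lintegral_one,
      measure_univ]
    rw [show (1 : ℝ≥0∞) = ENNReal.ofReal 1 by simp]
    exact ENNReal.ofReal_le_ofReal hsqrt2
  · set l := c ^ 2 / 2 with hl_def
    have hl0 : (0:ℝ) ≤ l := by positivity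
    set Sig := ∑ j ∈ B, (st j + δ) * tau j with hSig_def
    have hSigpos : 0 < Sig :=
      Finset.sum_pos (fun j _ => mul_pos (by linarith [hst j]) (htau_pos j)) hB
    have hlS : l * Sig ≤ 1 / 4 := hSig
    have hlS0 : 0 ≤ l * Sig := mul_nonneg hl0 hSigpos.le
    set m : I → ℝ := fun j => l * Sig / tau j with hm_def
    have hm0 : ∀ j, 0 ≤ m j := fun j => div_nonneg hlS0 (htau_pos j).le
    set q : I → ℝ := fun j => (st j + δ) * tau j / Sig with hq_def
    have hq1 : ∑ j ∈ B, q j = 1 := by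
      simp only [hq_def]
      rw [← Finset.sum_div]
      exact div_self hSigpos.ne'
    have hq0 : ∀ j ∈ B, 0 ≤ q j := fun j _ =>
      div_nonneg (mul_nonneg (by linarith [hst j]) (htau_pos j).le) hSigpos.le
    have hY2 : ∀ j ∈ B, ∀ θ : ℝ, ∫⁻ ω, ENNReal.ofReal (exp (θ * (V j ω).2)) ∂μ
        ≤ ENNReal.ofReal (exp ((st j + δ) * θ ^ 2 / 2)) := by
      intro j _ θ
      refine (sg_lintegral (hY j) θ).trans (ENNReal.ofReal_le_ofReal (exp_le_exp.mpr ?_))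
      nlinarith [sq_nonneg θ, hδ.le]
    have step1 := decouple_step hmeas hindep A B hAB
      (fun j u => c * ∑ i ∈ A.attach, g i.1 j * u i)
      (fun j => (Finset.measurable_sum _ fun i _ =>
        (measurable_pi_apply i).const_mul _).const_mul c)
      (fun j => st j + δ) hY2
    have hatt : ∀ j : I, ∀ ω, (c * ∑ i ∈ A.attach, g i.1 j * (V i.1 ω).1) = c * T j ω := by
      intro j ω
      rw [Finset.sum_attach A fun i => g i j * (V i ω).1]
    have hLeq : ∀ ω, (c * ∑ j ∈ B, (∑ i ∈ A, g i j * (V i ω).1) * (V j ω).2)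
        = ∑ j ∈ B, (c * ∑ i ∈ A.attach, g i.1 j * (V i.1 ω).1) * (V j ω).2 := by
      intro ω
      rw [Finset.mul_sum]
      refine Finset.sum_congr rfl fun j _ => ?_
      rw [hatt j ω]
      ring
    have hRe : ∀ ω, ENNReal.ofReal
        (exp (∑ j ∈ B, (st j + δ) * (c * ∑ i ∈ A.attach, g i.1 j * (V i.1 ω).1) ^ 2 / 2))
        = ∏ j ∈ B, (ENNReal.ofReal (exp (m j * T j ω ^ 2))) ^ q j := by
      intro ω
      rw [exp_sum, ENNReal.ofReal_prod_of_nonneg (fun _ _ => (exp_pos _).le)]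
      refine Finset.prod_congr rfl fun j _ => ?_
      rw [ENNReal.ofReal_rpow_of_pos (exp_pos _)]
      congr 1
      rw [← Real.exp_mul]
      congr 1
      rw [hatt j ω]
      have ht0 := (htau_pos j).ne'
      have hS0 := hSigpos.ne'
      simp only [hm_def, hq_def, hl_def]
      field_simp
    have hmt : ∀ j, m j * tau j = l * Sig := fun j => by
      simp only [hm_def]
      rw [div_mul_eq_mul_div, mul_div_assoc, div_self (htau_pos j).ne', mul_one]
    have hbound : ∀ j ∈ B, ∫⁻ ω, ENNReal.ofReal (exp (m j * T j ω ^ 2)) ∂μ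
        ≤ ENNReal.ofReal ((Real.sqrt (1 - 2 * (l * Sig)))⁻¹) := by
      intro j _
      have h := sq_mgf (hTm j) (htau_pos j).le (hm0 j)
        (by rw [hmt j]; linarith) (hTmgf j)
      rwa [hmt j] at h
    have hfm : ∀ j ∈ B, AEMeasurable (fun ω => ENNReal.ofReal (exp (m j * T j ω ^ 2))) μ :=
      fun j _ => ((((hTm j).pow_const 2).const_mul _).exp.ennreal_ofReal).aemeasurable
    have holder := ENNReal.lintegral_prod_norm_pow_le B hfm hq1 hq0
    set r := (Real.sqrt (1 - 2 * (l * Sig)))⁻¹ with hr_def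
    have h12 : (0:ℝ) < 1 - 2 * (l * Sig) := by linarith
    have hrpos : 0 < r := by
      rw [hr_def]
      positivity
    have hrle : r ≤ Real.sqrt 2 := by
      have hhalf : (1/2:ℝ) ≤ 1 - 2 * (l * Sig) := by linarith
      have hmono : Real.sqrt (1/2) ≤ Real.sqrt (1 - 2 * (l * Sig)) := Real.sqrt_le_sqrt hhalf
      have hhpos : (0:ℝ) < Real.sqrt (1/2) := by positivity
      have : (Real.sqrt (1 - 2 * (l * Sig)))⁻¹ ≤ (Real.sqrt (1/2))⁻¹ := by
        exact inv_anti₀ hhpos hmono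
      calc r ≤ (Real.sqrt (1/2))⁻¹ := this
        _ = Real.sqrt 2 := by
          rw [show (1/2:ℝ) = 2⁻¹ by norm_num, Real.sqrt_inv, inv_inv]
    calc ∫⁻ ω, ENNReal.ofReal
          (exp (c * ∑ j ∈ B, (∑ i ∈ A, g i j * (V i ω).1) * (V j ω).2)) ∂μ
        = ∫⁻ ω, ENNReal.ofReal
            (exp (∑ j ∈ B, (c * ∑ i ∈ A.attach, g i.1 j * (V i.1 ω).1) * (V j ω).2)) ∂μ :=
          lintegral_congr fun ω => by rw [hLeq ω]
      _ ≤ ∫⁻ ω, ENNReal.ofReal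
            (exp (∑ j ∈ B, (st j + δ) *
              (c * ∑ i ∈ A.attach, g i.1 j * (V i.1 ω).1) ^ 2 / 2)) ∂μ := step1
      _ = ∫⁻ ω, ∏ j ∈ B, (ENNReal.ofReal (exp (m j * T j ω ^ 2))) ^ q j ∂μ :=
          lintegral_congr hRe
      _ ≤ ∏ j ∈ B, (∫⁻ ω, ENNReal.ofReal (exp (m j * T j ω ^ 2)) ∂μ) ^ q j := holder
      _ ≤ ∏ j ∈ B, (ENNReal.ofReal r) ^ q j :=
          Finset.prod_le_prod' fun j hj => ENNReal.rpow_le_rpow (hbound j hj) (hq0 j hj)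
      _ = ENNReal.ofReal r := by
          rw [← rpow_finset_sum _ (by simp [hrpos] : ENNReal.ofReal r ≠ 0)
            ENNReal.ofReal_ne_top, hq1, ENNReal.rpow_one]
      _ ≤ ENNReal.ofReal (Real.sqrt 2) := ENNReal.ofReal_le_ofReal hrle

lemma pair_sum_eq {I : Type*} [Fintype I] [DecidableEq I] (F : I → I → ℝ) :
    ∑ p ∈ (Finset.univ ×ˢ Finset.univ).filter (fun p : I × I => p.1 ≠ p.2), F p.1 p.2
      = ∑ i : I, ∑ j ∈ Finset.univ.erase i, F i j := by
  rw [Finset.sum_filter, Finset.sum_product]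
  refine Finset.sum_congr rfl fun i _ => ?_
  rw [← Finset.sum_filter]
  refine Finset.sum_congr ?_ fun _ _ => rfl
  ext j
  simp [Finset.mem_erase, ne_comm]

lemma pair_subset {I : Type*} [Fintype I] [DecidableEq I] (F : I → I → ℝ)
    (hF : ∀ i j, 0 ≤ F i j) (A B : Finset I) (hAB : Disjoint A B) :
    ∑ j ∈ B, ∑ i ∈ A, F i j ≤ ∑ i : I, ∑ j ∈ Finset.univ.erase i, F i j := by
  rw [← pair_sum_eq F, Finset.sum_comm]
  have h1 : ∑ i ∈ A, ∑ j ∈ B, F i j = ∑ p ∈ A ×ˢ B, F p.1 p.2 :=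
    (Finset.sum_product (s := A) (t := B) (f := fun p => F p.1 p.2)).symm
  rw [h1]
  refine Finset.sum_le_sum_of_subset_of_nonneg ?_ fun p _ _ => hF p.1 p.2
  intro p hp
  obtain ⟨hp1, hp2⟩ := Finset.mem_product.mp hp
  refine Finset.mem_filter.mpr ⟨Finset.mem_product.mpr ⟨Finset.mem_univ _, Finset.mem_univ _⟩, ?_⟩
  intro heq
  exact Finset.disjoint_left.mp hAB hp1 (heq ▸ hp2)

lemma count_sum {I : Type*} [Fintype I] [DecidableEq I] (F : I → I → ℝ) :
    4 * ∑ ε : I → Bool, (∑ j ∈ Finset.univ.filter (fun j => ε j = false),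
        ∑ i ∈ Finset.univ.filter (fun i => ε i = true), F i j)
      = 2 ^ (Fintype.card I) * ∑ i : I, ∑ j ∈ Finset.univ.erase i, F i j := by
  classical
  have hA : ∀ ε : I → Bool, (∑ j ∈ Finset.univ.filter (fun j => ε j = false),
      ∑ i ∈ Finset.univ.filter (fun i => ε i = true), F i j)
      = ∑ p ∈ (Finset.univ ×ˢ Finset.univ).filter (fun p : I × I => p.1 ≠ p.2),
          (if ε p.1 = true ∧ ε p.2 = false then F p.1 p.2 else 0) := by
    intro ε
    rw [Finset.sum_comm]
    have hset : (Finset.univ.filter (fun i => ε i = true)) ×ˢ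
        (Finset.univ.filter (fun j => ε j = false))
        = ((Finset.univ ×ˢ Finset.univ).filter (fun p : I × I => p.1 ≠ p.2)).filter
            (fun p => ε p.1 = true ∧ ε p.2 = false) := by
      ext p
      simp only [Finset.mem_product, Finset.mem_filter, Finset.mem_univ, true_and]
      constructor
      · rintro ⟨h1, h2⟩
        refine ⟨?_, h1, h2⟩
        intro heq
        rw [heq, h2] at h1
        exact Bool.false_ne_true h1
      · tauto
    have h1 : ∑ i ∈ Finset.univ.filter (fun i => ε i = true),
        ∑ j ∈ Finset.univ.filter (fun j => ε j = false), F i j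
        = ∑ p ∈ (Finset.univ.filter (fun i => ε i = true)) ×ˢ
            (Finset.univ.filter (fun j => ε j = false)), F p.1 p.2 :=
      (Finset.sum_product (s := Finset.univ.filter (fun i => ε i = true))
        (t := Finset.univ.filter (fun j => ε j = false)) (f := fun p => F p.1 p.2)).symm
    rw [h1, hset, Finset.sum_filter]
  rw [Finset.sum_congr rfl fun ε _ => hA ε, Finset.sum_comm, ← pair_sum_eq F,
    Finset.mul_sum, Finset.mul_sum]
  refine Finset.sum_congr rfl fun p hp => ?_
  have hne : p.1 ≠ p.2 := (Finset.mem_filter.mp hp).2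
  have hcount : ((Finset.univ.filter
      (fun ε : I → Bool => ε p.1 = true ∧ ε p.2 = false)).card : ℝ) * 4
      = 2 ^ (Fintype.card I) := by
    set i := p.1
    set j := p.2
    set h : I → Bool → ℝ := fun k b =>
      if k = i then (if b = true then 1 else 0)
      else if k = j then (if b = false then 1 else 0) else 1 with hh
    have hji : j ∈ Finset.univ.erase i := Finset.mem_erase.mpr ⟨Ne.symm hne, Finset.mem_univ _⟩
    have hterm : ∀ ε : I → Bool, (∏ k : I, h k (ε k))
        = if ε i = true ∧ ε j = false then (1 : ℝ) else 0 := by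
      intro ε
      have step1 : (∏ k : I, h k (ε k))
          = h i (ε i) * ∏ k ∈ Finset.univ.erase i, h k (ε k) :=
        (Finset.mul_prod_erase _ _ (Finset.mem_univ i)).symm
      have step2 : ∏ k ∈ Finset.univ.erase i, h k (ε k)
          = h j (ε j) * ∏ k ∈ (Finset.univ.erase i).erase j, h k (ε k) :=
        (Finset.mul_prod_erase _ _ hji).symm
      have step3 : ∏ k ∈ (Finset.univ.erase i).erase j, h k (ε k) = 1 := by
        apply Finset.prod_eq_one
        intro k hk
        have hk1 : k ≠ j := (Finset.mem_erase.mp hk).1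
        have hk2 : k ≠ i := (Finset.mem_erase.mp (Finset.mem_erase.mp hk).2).1
        simp [hh, hk1, hk2]
      rw [step1, step2, step3, mul_one]
      cases hεi : ε i <;> cases hεj : ε j <;> simp [hh, hne, Ne.symm hne]
    have hsum : ∑ ε : I → Bool, ∏ k : I, h k (ε k)
        = ((Finset.univ.filter
            (fun ε : I → Bool => ε i = true ∧ ε j = false)).card : ℝ) := by
      rw [Finset.sum_congr rfl fun ε _ => hterm ε, Finset.sum_boole]
    have hkey : (∏ k : I, ∑ b : Bool, h k b) = ∑ ε : I → Bool, ∏ k : I, h k (ε k) := by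
      rw [Finset.prod_univ_sum]
      rw [Fintype.piFinset_univ]
    have hcol : ∀ k : I, (∑ b : Bool, h k b)
        = if k = i then 1 else if k = j then 1 else 2 := by
      intro k
      rw [Fintype.sum_bool]
      simp only [hh]
      split_ifs <;> simp_all <;> norm_num
    have hn2 : 2 ≤ Fintype.card I := by
      have : 1 < Fintype.card I := Fintype.one_lt_card_iff.mpr ⟨i, j, hne⟩
      omega
    have hprodval : (∏ k : I, ∑ b : Bool, h k b) = 2 ^ (Fintype.card I - 2) := by
      rw [Finset.prod_congr rfl fun k _ => hcol k,
        ← Finset.mul_prod_erase _ _ (Finset.mem_univ i), ← Finset.mul_prod_erase _ _ hji]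
      have hrest : ∏ k ∈ (Finset.univ.erase i).erase j,
          (if k = i then (1:ℝ) else if k = j then 1 else 2)
          = ∏ _k ∈ (Finset.univ.erase i).erase j, (2:ℝ) := by
        refine Finset.prod_congr rfl fun k hk => ?_
        have hk1 : k ≠ j := (Finset.mem_erase.mp hk).1
        have hk2 : k ≠ i := (Finset.mem_erase.mp (Finset.mem_erase.mp hk).2).1
        simp [hk1, hk2]
      rw [hrest, Finset.prod_const]
      have hcard : ((Finset.univ.erase i).erase j).card = Fintype.card I - 2 := by
        rw [Finset.card_erase_of_mem hji, Finset.card_erase_of_mem (Finset.mem_univ i),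
          Finset.card_univ]
        omega
      simp [hne, Ne.symm hne, hcard]
    rw [← hsum, ← hkey, hprodval, show (4:ℝ) = 2 ^ 2 by norm_num, ← pow_add]
    congr 1
    omega
  have hite : ∑ ε : I → Bool, (if ε p.1 = true ∧ ε p.2 = false then F p.1 p.2 else 0)
      = ((Finset.univ.filter
          (fun ε : I → Bool => ε p.1 = true ∧ ε p.2 = false)).card : ℝ) * F p.1 p.2 := by
    rw [← Finset.sum_filter, Finset.sum_const, nsmul_eq_mul]
  rw [hite, ← hcount]
  ring

end HW

/-- **Proposition B.7 (Hanson–Wright inequality).** -/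
theorem hanson_wright
    {Ω : Type*} [MeasurableSpace Ω] (μ : Measure Ω) [IsProbabilityMeasure μ]
    {I : Type*} [Fintype I] [DecidableEq I]
    -- independent random vectors `(Xᵢ, Yᵢ)` in `ℝ²`
    (V : I → Ω → ℝ × ℝ)
    (hmeas : ∀ i, Measurable (V i))
    (hindep : ProbabilityTheory.iIndepFun V μ)
    -- `Xᵢ` is sub-Gaussian of index `σᵢ²`, `Yᵢ` is sub-Gaussian of index `σ̃ᵢ²`
    (s st : I → ℝ)
    (hX : ∀ i, SubGaussianIdx μ (fun ω => (V i ω).1) (s i))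
    (hY : ∀ i, SubGaussianIdx μ (fun ω => (V i ω).2) (st i))
    (g : I → I → ℝ)
    (γ : ℝ) (hγ0 : 0 < γ)
    -- `γ ≤ (1024 ∑_{i≠j} σᵢ² σ̃ⱼ² g_{ij}²)^{-1/2}`
    (hγ : γ ^ 2 * (1024 * ∑ i : I, ∑ j ∈ Finset.univ.erase i,
        s i * st j * g i j ^ 2) ≤ 1) :
    ∫⁻ ω, ENNReal.ofReal (Real.exp (γ * ∑ i : I, ∑ j ∈ Finset.univ.erase i,
        g i j * (V i ω).1 * (V j ω).2)) ∂μ ≤ 3 := by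
  classical
  have hs : ∀ i, 0 ≤ s i := fun i => HW.sg_nonneg (hX i)
  have hst : ∀ i, 0 ≤ st i := fun i => HW.sg_nonneg (hY i)
  set n := Fintype.card I with hn_def
  set S := ∑ i : I, ∑ j ∈ Finset.univ.erase i, s i * st j * g i j ^ 2 with hS_def
  have hS0 : 0 ≤ S := Finset.sum_nonneg fun i _ => Finset.sum_nonneg fun j _ =>
    mul_nonneg (mul_nonneg (hs i) (hst j)) (sq_nonneg _)
  have hγS : γ ^ 2 * S ≤ 1 / 1024 := by nlinarith [hγ]
  set K := ∑ j : I, (st j + (∑ i : I, s i * g i j ^ 2) + 1) with hK_def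
  have hK0 : 0 ≤ K := Finset.sum_nonneg fun j _ => by
    have h0 : 0 ≤ ∑ i : I, s i * g i j ^ 2 :=
      Finset.sum_nonneg fun i _ => mul_nonneg (hs i) (sq_nonneg _)
    linarith [hst j]
  set δ := min 1 (1 / (1024 * γ ^ 2 * (K + 1))) with hδ_def
  have hδpos : 0 < δ := lt_min one_pos (by positivity)
  have hδ1 : δ ≤ 1 := min_le_left _ _
  have hδK : 1024 * γ ^ 2 * (δ * (K + 1)) ≤ 1 := by
    have h2 : δ ≤ 1 / (1024 * γ ^ 2 * (K + 1)) := min_le_right _ _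
    have hpos : 0 < 1024 * γ ^ 2 * (K + 1) := by positivity
    calc 1024 * γ ^ 2 * (δ * (K + 1)) = (1024 * γ ^ 2 * (K + 1)) * δ := by ring
      _ ≤ (1024 * γ ^ 2 * (K + 1)) * (1 / (1024 * γ ^ 2 * (K + 1))) :=
          mul_le_mul_of_nonneg_left h2 hpos.le
      _ = 1 := mul_one_div_cancel hpos.ne'
  set Af : (I → Bool) → Finset I := fun ε => Finset.univ.filter (fun i => ε i = true)
    with hAf_def
  set Bf : (I → Bool) → Finset I := fun ε => Finset.univ.filter (fun j => ε j = false)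
    with hBf_def
  have hABd : ∀ ε, Disjoint (Af ε) (Bf ε) := by
    intro ε
    rw [Finset.disjoint_left]
    intro a ha hb
    have h1 : ε a = true := (Finset.mem_filter.mp ha).2
    have h2 : ε a = false := (Finset.mem_filter.mp hb).2
    rw [h1] at h2
    simp at h2
  have hSigbound : ∀ ε : I → Bool,
      (4 * γ) ^ 2 / 2 * (∑ j ∈ Bf ε, (st j + δ) *
        (δ + ∑ i ∈ Af ε, s i * g i j ^ 2)) ≤ 1 / 4 := by
    intro ε
    have hexp : ∀ j ∈ Bf ε, (st j + δ) * (δ + ∑ i ∈ Af ε, s i * g i j ^ 2)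
        ≤ (∑ i ∈ Af ε, s i * st j * g i j ^ 2)
          + δ * (st j + (∑ i : I, s i * g i j ^ 2) + 1) := by
      intro j _
      have e1 : ∑ i ∈ Af ε, s i * g i j ^ 2 ≤ ∑ i : I, s i * g i j ^ 2 :=
        Finset.sum_le_sum_of_subset_of_nonneg (Finset.subset_univ _)
          (fun i _ _ => mul_nonneg (hs i) (sq_nonneg _))
      have e0 : 0 ≤ ∑ i ∈ Af ε, s i * g i j ^ 2 :=
        Finset.sum_nonneg fun i _ => mul_nonneg (hs i) (sq_nonneg _)
      have e2 : st j * (∑ i ∈ Af ε, s i * g i j ^ 2)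
          = ∑ i ∈ Af ε, s i * st j * g i j ^ 2 := by
        rw [Finset.mul_sum]
        exact Finset.sum_congr rfl fun i _ => by ring
      nlinarith [hst j, hδpos.le, hδ1]
    have hsum : ∑ j ∈ Bf ε, (st j + δ) * (δ + ∑ i ∈ Af ε, s i * g i j ^ 2)
        ≤ S + δ * K := by
      calc ∑ j ∈ Bf ε, (st j + δ) * (δ + ∑ i ∈ Af ε, s i * g i j ^ 2)
          ≤ ∑ j ∈ Bf ε, ((∑ i ∈ Af ε, s i * st j * g i j ^ 2)
              + δ * (st j + (∑ i : I, s i * g i j ^ 2) + 1)) := Finset.sum_le_sum hexp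
        _ = (∑ j ∈ Bf ε, ∑ i ∈ Af ε, s i * st j * g i j ^ 2)
              + δ * ∑ j ∈ Bf ε, (st j + (∑ i : I, s i * g i j ^ 2) + 1) := by
            rw [Finset.sum_add_distrib, Finset.mul_sum]
        _ ≤ S + δ * K := by
            have h1 := HW.pair_subset (fun i j => s i * st j * g i j ^ 2)
              (fun i j => mul_nonneg (mul_nonneg (hs i) (hst j)) (sq_nonneg _))
              (Af ε) (Bf ε) (hABd ε)
            have h2 : ∑ j ∈ Bf ε, (st j + (∑ i : I, s i * g i j ^ 2) + 1) ≤ K :=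
              Finset.sum_le_sum_of_subset_of_nonneg (Finset.subset_univ _)
                (fun j _ _ => by
                  have h0 : 0 ≤ ∑ i : I, s i * g i j ^ 2 :=
                    Finset.sum_nonneg fun i _ => mul_nonneg (hs i) (sq_nonneg _)
                  linarith [hst j])
            have h3 := mul_le_mul_of_nonneg_left h2 hδpos.le
            linarith
    have hδK' : 8 * γ ^ 2 * (δ * K) ≤ 8 / 1024 := by
      have h1 : γ ^ 2 * (δ * (K + 1)) ≤ 1 / 1024 := by linarith
      have h2 : δ * K ≤ δ * (K + 1) := by nlinarith [hδpos.le]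
      nlinarith [sq_nonneg γ, hδpos.le]
    have hnn : 0 ≤ ∑ j ∈ Bf ε, (st j + δ) * (δ + ∑ i ∈ Af ε, s i * g i j ^ 2) := by
      refine Finset.sum_nonneg fun j _ => mul_nonneg (by linarith [hst j]) ?_
      have e0 : 0 ≤ ∑ i ∈ Af ε, s i * g i j ^ 2 :=
        Finset.sum_nonneg fun i _ => mul_nonneg (hs i) (sq_nonneg _)
      linarith
    calc (4 * γ) ^ 2 / 2 * (∑ j ∈ Bf ε, (st j + δ) * (δ + ∑ i ∈ Af ε, s i * g i j ^ 2))
        = 8 * γ ^ 2 * (∑ j ∈ Bf ε, (st j + δ) * (δ + ∑ i ∈ Af ε, s i * g i j ^ 2)) := by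
          ring
      _ ≤ 8 * γ ^ 2 * (S + δ * K) := by
          apply mul_le_mul_of_nonneg_left hsum (by positivity)
      _ = 8 * (γ ^ 2 * S) + 8 * γ ^ 2 * (δ * K) := by ring
      _ ≤ 8 * (1 / 1024) + 8 / 1024 := by nlinarith [hγS, hδK']
      _ ≤ 1 / 4 := by norm_num
  set Zb : (I → Bool) → Ω → ℝ := fun ε ω =>
    ∑ j ∈ Bf ε, (∑ i ∈ Af ε, g i j * (V i ω).1) * (V j ω).2 with hZb_def
  have hZbm : ∀ ε, Measurable (Zb ε) := by
    intro ε
    apply Finset.measurable_sum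
    intro j _
    exact (Finset.measurable_sum _ fun i _ => (hmeas i).fst.const_mul _).mul (hmeas j).snd
  have hblock : ∀ ε : I → Bool,
      ∫⁻ ω, ENNReal.ofReal (Real.exp (4 * γ * Zb ε ω)) ∂μ
        ≤ ENNReal.ofReal (Real.sqrt 2) := by
    intro ε
    have h := HW.block_bound hmeas hindep s st hX hY hs hst g (4 * γ) δ hδpos
      (Af ε) (Bf ε) (hABd ε) (hSigbound ε)
    convert h using 4
  have hcardI : (Finset.univ : Finset (I → Bool)).card = 2 ^ n := by
    rw [Finset.card_univ, Fintype.card_fun, Fintype.card_bool]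
  set w : ℝ := ((2 : ℝ) ^ n)⁻¹ with hw_def
  have hw0 : 0 ≤ w := by positivity
  have hw1 : w * 2 ^ n = 1 := inv_mul_cancel₀ (by positivity)
  have hjensen : ∀ ω, exp (γ * ∑ i : I, ∑ j ∈ Finset.univ.erase i,
      g i j * (V i ω).1 * (V j ω).2) ≤ ∑ ε : I → Bool, w * exp (4 * γ * Zb ε ω) := by
    intro ω
    have hcnt := HW.count_sum (fun i j => g i j * (V i ω).1 * (V j ω).2)
    have hZbeq : ∀ ε : I → Bool, Zb ε ω
        = ∑ j ∈ Bf ε, ∑ i ∈ Af ε, g i j * (V i ω).1 * (V j ω).2 := by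
      intro ε
      refine Finset.sum_congr rfl fun j _ => ?_
      rw [Finset.sum_mul]
    have hlin : γ * ∑ i : I, ∑ j ∈ Finset.univ.erase i, g i j * (V i ω).1 * (V j ω).2
        = ∑ ε : I → Bool, w • (4 * γ * Zb ε ω) := by
      simp only [smul_eq_mul]
      rw [← Finset.mul_sum, ← Finset.mul_sum,
        Finset.sum_congr rfl fun ε _ => hZbeq ε]
      have hcnt' : (4:ℝ) * ∑ ε : I → Bool, ∑ j ∈ Bf ε, ∑ i ∈ Af ε,
          g i j * (V i ω).1 * (V j ω).2
          = 2 ^ n * ∑ i : I, ∑ j ∈ Finset.univ.erase i,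
              g i j * (V i ω).1 * (V j ω).2 := hcnt
      calc γ * ∑ i : I, ∑ j ∈ Finset.univ.erase i, g i j * (V i ω).1 * (V j ω).2
          = (w * 2 ^ n) * (γ * ∑ i : I, ∑ j ∈ Finset.univ.erase i,
              g i j * (V i ω).1 * (V j ω).2) := by rw [hw1, one_mul]
        _ = w * (γ * (2 ^ n * ∑ i : I, ∑ j ∈ Finset.univ.erase i,
              g i j * (V i ω).1 * (V j ω).2)) := by ring
        _ = w * (γ * (4 * ∑ ε : I → Bool, ∑ j ∈ Bf ε, ∑ i ∈ Af ε,
              g i j * (V i ω).1 * (V j ω).2)) := by rw [← hcnt']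
        _ = w * (4 * γ * ∑ ε : I → Bool, ∑ j ∈ Bf ε, ∑ i ∈ Af ε,
              g i j * (V i ω).1 * (V j ω).2) := by ring
    have hsum1 : ∑ _ε : I → Bool, w = 1 := by
      rw [Finset.sum_const, hcardI, nsmul_eq_mul]
      push_cast
      rw [mul_comm]
      exact hw1
    calc exp (γ * ∑ i : I, ∑ j ∈ Finset.univ.erase i, g i j * (V i ω).1 * (V j ω).2)
        = exp (∑ ε : I → Bool, w • (4 * γ * Zb ε ω)) := by rw [hlin]
      _ ≤ ∑ ε : I → Bool, w • exp (4 * γ * Zb ε ω) :=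
          convexOn_exp.map_sum_le (fun _ _ => hw0) hsum1 (fun _ _ => Set.mem_univ _)
      _ = ∑ ε : I → Bool, w * exp (4 * γ * Zb ε ω) := by simp [smul_eq_mul]
  have hmeas2 : ∀ ε : I → Bool,
      Measurable fun ω => ENNReal.ofReal (w * exp (4 * γ * Zb ε ω)) := fun ε =>
    ((((hZbm ε).const_mul (4 * γ)).exp).const_mul w).ennreal_ofReal
  have hsqrt3 : Real.sqrt 2 ≤ 3 := by
    nlinarith [Real.sq_sqrt (show (0:ℝ) ≤ 2 by norm_num), Real.sqrt_nonneg 2]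
  calc ∫⁻ ω, ENNReal.ofReal (Real.exp (γ * ∑ i : I, ∑ j ∈ Finset.univ.erase i,
        g i j * (V i ω).1 * (V j ω).2)) ∂μ
      ≤ ∫⁻ ω, ∑ ε : I → Bool, ENNReal.ofReal (w * exp (4 * γ * Zb ε ω)) ∂μ := by
        refine lintegral_mono fun ω => ?_
        calc ENNReal.ofReal (Real.exp (γ * ∑ i : I, ∑ j ∈ Finset.univ.erase i,
              g i j * (V i ω).1 * (V j ω).2))
            ≤ ENNReal.ofReal (∑ ε : I → Bool, w * exp (4 * γ * Zb ε ω)) :=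
              ENNReal.ofReal_le_ofReal (hjensen ω)
          _ = ∑ ε : I → Bool, ENNReal.ofReal (w * exp (4 * γ * Zb ε ω)) :=
              ENNReal.ofReal_sum_of_nonneg fun ε _ =>
                mul_nonneg hw0 (exp_pos _).le
    _ = ∑ ε : I → Bool, ∫⁻ ω, ENNReal.ofReal (w * exp (4 * γ * Zb ε ω)) ∂μ :=
        lintegral_finset_sum _ fun ε _ => hmeas2 ε
    _ ≤ ∑ ε : I → Bool, ENNReal.ofReal (w * Real.sqrt 2) := by
        refine Finset.sum_le_sum fun ε _ => ?_
        have hcong : ∀ ω, ENNReal.ofReal (w * exp (4 * γ * Zb ε ω))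
            = ENNReal.ofReal w * ENNReal.ofReal (exp (4 * γ * Zb ε ω)) := fun ω =>
          ENNReal.ofReal_mul hw0
        rw [lintegral_congr hcong,
          lintegral_const_mul _ (((hZbm ε).const_mul (4 * γ)).exp.ennreal_ofReal),
          ENNReal.ofReal_mul hw0]
        exact mul_le_mul_right (hblock ε) _
    _ = ENNReal.ofReal (∑ _ε : I → Bool, w * Real.sqrt 2) :=
        (ENNReal.ofReal_sum_of_nonneg fun ε _ =>
          mul_nonneg hw0 (Real.sqrt_nonneg 2)).symm
    _ = ENNReal.ofReal (Real.sqrt 2) := by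
        rw [Finset.sum_const, hcardI, nsmul_eq_mul]
        congr 1
        push_cast
        rw [← mul_assoc, mul_comm ((2:ℝ) ^ n) w, hw1, one_mul]
    _ ≤ 3 := by
        calc ENNReal.ofReal (Real.sqrt 2) ≤ ENNReal.ofReal 3 :=
            ENNReal.ofReal_le_ofReal hsqrt3
          _ = 3 := by norm_num
end
end
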